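/- arXiv:2605.01824 — 7 statements merged into one kernel-verified Lean document; each statement's English description precedes it below -/
import Mathlib

section
/- Let K ⊂ ℝ be the attractor of a self-similar IFS {f_i}_{i=1}^ℓ of contractive similitudes, let t_0 < t_1 < ⋯ < t_m be real numbers, and set K_t = ⋃_{j=0}^m (K + t_j). If there exists a finite set 𝒢 of similitudes on ℝ such that ⋃_{g∈𝒢} g(K_t) = K, then K_t is a self-similar set; indeed K_t is the attractor of the IFS {x ↦ g(x) + t_j : g ∈ 𝒢, 0 ≤ j ≤ m}. -/
/-!
Put `K_t = ⋃ⱼ (K + tⱼ)`. Substituting `K = ⋃ᵢ fᵢ(K)` and then `K = ⋃_g g(K_t)` gives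
`K_t = ⋃_{j,i,g} (fᵢ ∘ g)(K_t) + tⱼ`. Each `g` maps `K_t` into `K`, and `diam K ≤ diam K_t`,
so `g` has ratio at most `1` as soon as `K_t` is not a point; composing with the strict
contraction `fᵢ` then yields a strict contraction. A single point is self-similar anyway.
-/

/-- A set `S ⊆ ℝ` is self-similar if it is the attractor (unique nonempty compact
invariant set) of a finite IFS of contractive similitudes on `ℝ`. -/
def IsSelfSimilar (S : Set ℝ) : Prop :=
  S.Nonempty ∧ IsCompact S ∧
    ∃ (n : ℕ) (r a : Fin n → ℝ), 0 < n ∧ (∀ i, r i ≠ 0 ∧ |r i| < 1) ∧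
      S = ⋃ i, (fun x => r i * x + a i) '' S

open Metric Set
open scoped Pointwise

theorem isSelfSimilar_of_fintype {ι : Type*} [Fintype ι] {S : Set ℝ} (hne : S.Nonempty)
    (hcpt : IsCompact S) (r a : ι → ℝ) (hr : ∀ i, r i ≠ 0 ∧ |r i| < 1)
    (hS : S = ⋃ i, (fun x => r i * x + a i) '' S) : IsSelfSimilar S := by
  let e := (Fintype.equivFin ι).symm
  have : Nonempty ι := by
    by_contra h
    rw [not_nonempty_iff] at h
    rw [iUnion_of_empty] at hS
    exact hne.ne_empty hS
  refine ⟨hne, hcpt, Fintype.card ι, r ∘ e, a ∘ e, Fintype.card_pos, fun i => hr (e i), ?_⟩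
  conv_lhs => rw [hS]
  exact (e.surjective.iUnion_comp fun i => (fun x => r i * x + a i) '' S).symm

theorem isSelfSimilar_singleton (s : ℝ) : IsSelfSimilar {s} := by
  refine isSelfSimilar_of_fintype (ι := Unit) (singleton_nonempty s) isCompact_singleton
    (fun _ => 1 / 2) (fun _ => s / 2) (fun _ => by norm_num [abs_of_pos]) ?_
  simp only [iUnion_const, image_singleton]
  ring_nf

theorem Real.diam_image_mul_add (c d : ℝ) (S : Set ℝ) :
    diam ((fun x => c * x + d) '' S) = |c| * diam S := by
  have : (fun x => c * x + d) '' S = (· + d) '' (c • S) := by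
    rw [← image_smul, image_image]; rfl
  rw [this, (isometry_add_right d).diam_image, diam_smul₀, Real.norm_eq_abs]

theorem abs_le_one_of_image_mul_add_subset {c d : ℝ} {S T : Set ℝ} (hT : Bornology.IsBounded T)
    (hS : 0 < diam S) (hTS : diam T ≤ diam S) (h : (fun x => c * x + d) '' S ⊆ T) :
    |c| ≤ 1 := by
  have := diam_mono h hT
  rw [Real.diam_image_mul_add] at this
  exact (mul_le_iff_le_one_left hS).1 (this.trans hTS)

theorem eq_iUnion_image_comp {α κ μ : Type*} {S K : Set α} (τ : μ → α → α) (g : κ → α → α)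
    (hS : S = ⋃ j, τ j '' K) (hcover : K = ⋃ q, g q '' S) :
    S = ⋃ q, ⋃ j, (τ j ∘ g q) '' S := by
  conv_lhs => rw [hS, hcover]
  simp only [image_iUnion, image_image, Function.comp_apply]
  exact iUnion_comm _

theorem eq_iUnion_image_comp₃ {α ι κ μ : Type*} {S K : Set α} (τ : μ → α → α) (f : ι → α → α)
    (g : κ → α → α) (hS : S = ⋃ j, τ j '' K) (hK : K = ⋃ i, f i '' K)
    (hcover : K = ⋃ q, g q '' S) : S = ⋃ w : μ × ι × κ, (τ w.1 ∘ f w.2.1 ∘ g w.2.2) '' S := by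
  conv_lhs => rw [hS, hK, hcover]
  simp only [image_iUnion, image_image, iUnion_prod', Function.comp_apply]

theorem stmt_3_general (ℓ : ℕ) (r a : Fin ℓ → ℝ)
    (hr : ∀ i, r i ≠ 0 ∧ |r i| < 1)
    (K : Set ℝ) (hne : K.Nonempty) (hcpt : IsCompact K)
    (hK : K = ⋃ i, (fun x => r i * x + a i) '' K)
    (m : ℕ) (t : Fin (m + 1) → ℝ)
    (p : ℕ) (g : Fin p → ℝ → ℝ)
    (hg : ∀ q, ∃ c d : ℝ, c ≠ 0 ∧ ∀ x, g q x = c * x + d)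
    (hcover : (⋃ q, g q '' (⋃ j, (· + t j) '' K)) = K) :
    IsSelfSimilar (⋃ j, (· + t j) '' K) ∧
      (⋃ j, (· + t j) '' K) =
        ⋃ q, ⋃ j, (fun x => g q x + t j) '' (⋃ j', (· + t j') '' K) := by
  set Kt := ⋃ j, (· + t j) '' K with hKt
  refine ⟨?_, eq_iUnion_image_comp _ _ hKt hcover.symm⟩
  obtain ⟨s, hs⟩ : Kt.Nonempty := (hne.image _).mono (subset_iUnion_of_subset 0 le_rfl)
  have hKtcpt : IsCompact Kt := isCompact_iUnion fun j => hcpt.image (continuous_add_const _)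
  rcases Kt.subsingleton_or_nontrivial with hsub | hnt
  · rw [hsub.eq_singleton_of_mem hs]
    exact isSelfSimilar_singleton s
  choose c d hc hgcd using hg
  obtain rfl : g = fun q x => c q * x + d q := funext fun q => funext (hgcd q)
  have hdiam : diam K ≤ diam Kt := by
    rw [← (isometry_add_right (t 0)).diam_image K]
    exact diam_mono (subset_iUnion_of_subset 0 le_rfl) hKtcpt.isBounded
  have hc1 (q : Fin p) : |c q| ≤ 1 :=
    abs_le_one_of_image_mul_add_subset hcpt.isBounded (diam_pos hnt hKtcpt.isBounded) hdiam
      (hcover ▸ subset_iUnion_of_subset q le_rfl)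
  refine isSelfSimilar_of_fintype ⟨s, hs⟩ hKtcpt
    (fun w : Fin (m + 1) × Fin ℓ × Fin p => r w.2.1 * c w.2.2)
    (fun w => r w.2.1 * d w.2.2 + a w.2.1 + t w.1)
    (fun w => ⟨mul_ne_zero (hr _).1 (hc _), abs_mul (r _) (c _) ▸
      mul_lt_one_of_nonneg_of_lt_one_left (abs_nonneg _) (hr _).2 (hc1 _)⟩) ?_
  convert eq_iUnion_image_comp₃ _ _ _ hKt hK hcover.symm using 4 with w x
  simp only [Function.comp_apply]
  ring

theorem stmt_3 (ℓ : ℕ) (hℓ : 0 < ℓ) (r a : Fin ℓ → ℝ)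
    (hr : ∀ i, r i ≠ 0 ∧ |r i| < 1)
    (K : Set ℝ) (hne : K.Nonempty) (hcpt : IsCompact K)
    (hK : K = ⋃ i, (fun x => r i * x + a i) '' K)
    (m : ℕ) (t : Fin (m + 1) → ℝ) (ht : StrictMono t)
    (p : ℕ) (g : Fin p → ℝ → ℝ)
    (hg : ∀ q, ∃ c d : ℝ, c ≠ 0 ∧ ∀ x, g q x = c * x + d)
    (hcover : (⋃ q, g q '' (⋃ j, (· + t j) '' K)) = K) :
    IsSelfSimilar (⋃ j, (· + t j) '' K) ∧
      (⋃ j, (· + t j) '' K) =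
        ⋃ q, ⋃ j, (fun x => g q x + t j) '' (⋃ j', (· + t j') '' K) :=
  stmt_3_general ℓ r a hr K hne hcpt hK m t p g hg hcover
end

section
/- Let K ⊂ ℝ be a self-similar set that is the attractor of an IFS {f_i(x) = λ_i x + a_i}_{i=1}^ℓ satisfying the strong separation condition, and let t_0 < t_1 < ⋯ < t_m be real numbers with K_t = ⋃_{j=0}^m (K + t_j). Then K_t is a self-similar set if and only if there exists a finite set 𝒢 of similitudes on ℝ such that ⋃_{g∈𝒢} g(K_t) = K. -/
open Set Metric

theorem Finite.exists_lt_forall_le {ι α : Type*} [Finite ι] [LinearOrder α] [NoMinOrder α]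
    {f : ι → α} {a : α} (h : ∀ i, f i < a) : ∃ b < a, ∀ i, f i ≤ b := by
  rcases isEmpty_or_nonempty ι with hι | hι
  · obtain ⟨b, hb⟩ := exists_lt a
    exact ⟨b, hb, isEmptyElim⟩
  · obtain ⟨i₀, hi₀⟩ := Finite.exists_max f
    exact ⟨f i₀, h i₀, hi₀⟩

theorem dist_mul_add_mul_add (c d x y : ℝ) : dist (c * x + d) (c * y + d) = |c| * dist x y := by
  simp only [Real.dist_eq, ← abs_mul]
  ring_nf

theorem exists_pow_mul_lt_of_lt_one {κ : ℝ} (D : ℝ) {δ : ℝ} (h0 : 0 ≤ κ) (h1 : κ < 1)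
    (hδ : 0 < δ) : ∃ k : ℕ, κ ^ k * D < δ := by
  have hlim := (tendsto_pow_atTop_nhds_zero_of_lt_one h0 h1).mul_const D
  rw [zero_mul] at hlim
  exact (hlim.eventually (gt_mem_nhds hδ)).exists

theorem exists_pos_le_dist_of_disjoint {α : Type*} [MetricSpace α] {s t : Set α}
    (hs : IsCompact s) (ht : IsClosed t) (hst : Disjoint s t) :
    ∃ δ > 0, ∀ x ∈ s, ∀ y ∈ t, δ ≤ dist x y := by
  obtain ⟨δ, hδ, h⟩ := exists_pos_forall_lt_edist hs ht hst
  refine ⟨δ, hδ, fun x hx y hy => ?_⟩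
  have := h x hx y hy
  rw [edist_nndist] at this
  exact_mod_cast this.le

def IsUnionOfSimilarCopies (κ : ℝ) (S T : Set ℝ) : Prop :=
  ∃ (n : ℕ) (c d : Fin n → ℝ), (∀ i, c i ≠ 0 ∧ |c i| ≤ κ) ∧
    S = ⋃ i, (fun x => c i * x + d i) '' T

namespace IsUnionOfSimilarCopies

theorem refl (S : Set ℝ) : IsUnionOfSimilarCopies 1 S S :=
  ⟨1, fun _ => 1, fun _ => 0, fun _ => by norm_num, by simp [iUnion_const]⟩

theorem mono {κ κ' : ℝ} {S T : Set ℝ} (h : IsUnionOfSimilarCopies κ S T) (hκ : κ ≤ κ') :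
    IsUnionOfSimilarCopies κ' S T := by
  obtain ⟨n, c, d, hc, hS⟩ := h
  exact ⟨n, c, d, fun i => ⟨(hc i).1, (hc i).2.trans hκ⟩, hS⟩

theorem trans {κ₁ κ₂ : ℝ} {S T U : Set ℝ} (h₁ : IsUnionOfSimilarCopies κ₁ S T)
    (h₂ : IsUnionOfSimilarCopies κ₂ T U) : IsUnionOfSimilarCopies (κ₁ * κ₂) S U := by
  obtain ⟨n₁, c₁, d₁, hc₁, hS⟩ := h₁
  obtain ⟨n₂, c₂, d₂, hc₂, hT⟩ := h₂
  set e : Fin (n₁ * n₂) ≃ Fin n₁ × Fin n₂ := finProdFinEquiv.symm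
  refine ⟨n₁ * n₂, fun k => c₁ (e k).1 * c₂ (e k).2, fun k => c₁ (e k).1 * d₂ (e k).2 + d₁ (e k).1,
    fun k => ⟨mul_ne_zero (hc₁ _).1 (hc₂ _).1, ?_⟩, ?_⟩
  · rw [abs_mul]
    exact mul_le_mul (hc₁ _).2 (hc₂ _).2 (abs_nonneg _) ((abs_nonneg _).trans (hc₁ (e k).1).2)
  · rw [e.surjective.iUnion_comp (fun p : Fin n₁ × Fin n₂ =>
      (fun x => c₁ p.1 * c₂ p.2 * x + (c₁ p.1 * d₂ p.2 + d₁ p.1)) '' U), iUnion_prod', hS, hT]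
    simp only [image_iUnion, image_image]
    refine iUnion_congr fun i => iUnion_congr fun j => image_congr fun x _ => ?_
    ring

theorem pow {κ : ℝ} {S : Set ℝ} (h : IsUnionOfSimilarCopies κ S S) :
    ∀ k : ℕ, IsUnionOfSimilarCopies (κ ^ k) S S
  | 0 => by simpa using refl S
  | k + 1 => by simpa [pow_succ] using (h.pow k).trans h

theorem exists_mul_lt {κ D δ : ℝ} {S : Set ℝ} (h : IsUnionOfSimilarCopies κ S S) (hκ : κ < 1)
    (hδ : 0 < δ) : ∃ κ', κ' * D < δ ∧ IsUnionOfSimilarCopies κ' S S := by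
  obtain ⟨k, hk⟩ := exists_pow_mul_lt_of_lt_one D (le_max_right κ 0) (max_lt hκ one_pos) hδ
  exact ⟨_, hk, (h.mono (le_max_left κ 0)).pow k⟩

theorem iUnion_add {n : ℕ} (K : Set ℝ) (t : Fin n → ℝ) :
    IsUnionOfSimilarCopies 1 (⋃ j, (· + t j) '' K) K :=
  ⟨n, fun _ => 1, t, fun _ => by norm_num, by simp only [one_mul]⟩

theorem of_image {ρ : ℝ} (β : ℝ) (hρ : ρ ≠ 0) (T : Set ℝ) :
    IsUnionOfSimilarCopies |ρ|⁻¹ T ((fun x => ρ * x + β) '' T) := by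
  refine ⟨1, fun _ => ρ⁻¹, fun _ => -(ρ⁻¹ * β), fun _ => ⟨inv_ne_zero hρ, (abs_inv ρ).le⟩, ?_⟩
  rw [iUnion_const, image_image]
  refine (image_congr fun x _ => ?_).trans (image_id T) |>.symm
  dsimp only [id]
  field_simp
  ring

theorem of_separated {κ δ : ℝ} {Λ C : Set ℝ} (hΛ : IsUnionOfSimilarCopies κ Λ Λ)
    (hbdd : Bornology.IsBounded Λ) (hκ : κ * diam Λ < δ) (hCΛ : C ⊆ Λ) (hC : C.Nonempty)
    (hsep : ∀ x ∈ C, ∀ y ∈ Λ, y ∉ C → δ ≤ dist x y) : IsUnionOfSimilarCopies κ C Λ := by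
  classical
  obtain ⟨n, c, d, hc, hΛeq⟩ := hΛ
  set g : Fin n → ℝ → ℝ := fun i x => c i * x + d i
  have hpiece : ∀ i, g i '' Λ ⊆ Λ := fun i =>
    (subset_iUnion (fun i => g i '' Λ) i).trans hΛeq.symm.subset
  have hsmall : ∀ i, ∀ u ∈ Λ, ∀ v ∈ Λ, dist (g i u) (g i v) < δ := fun i u hu v hv =>
    calc dist (g i u) (g i v) = |c i| * dist u v := dist_mul_add_mul_add _ _ u v
      _ ≤ κ * diam Λ := mul_le_mul (hc i).2 (dist_le_diam_of_mem hbdd hu hv) dist_nonneg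
          ((abs_nonneg _).trans (hc i).2)
      _ < δ := hκ
  have hinside : ∀ i, (g i '' Λ ∩ C).Nonempty → g i '' Λ ⊆ C := by
    rintro i ⟨_, ⟨u, hu, rfl⟩, huC⟩ _ ⟨v, hv, rfl⟩
    by_contra hvC
    exact (hsmall i u hu v hv).not_ge (hsep _ huC _ (hpiece i ⟨v, hv, rfl⟩) hvC)
  obtain ⟨x₀, hx₀⟩ := hC
  obtain ⟨i₀, hi₀⟩ := mem_iUnion.mp (hΛeq.subset (hCΛ hx₀))
  -- pieces missing `C` are replaced by the piece `i₀`, which lies in `C`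
  let j : Fin n → Fin n := fun i => if (g i '' Λ ∩ C).Nonempty then i else i₀
  have hj : ∀ i, (g (j i) '' Λ ∩ C).Nonempty := fun i => by
    by_cases h : (g i '' Λ ∩ C).Nonempty
    · simpa only [j, if_pos h] using h
    · simpa only [j, if_neg h] using ⟨x₀, hi₀, hx₀⟩
  refine ⟨n, c ∘ j, d ∘ j, fun i => hc (j i), subset_antisymm (fun x hx => ?_)
    (iUnion_subset fun i => hinside (j i) (hj i))⟩
  obtain ⟨i, hi⟩ := mem_iUnion.mp (hΛeq.subset (hCΛ hx))
  have hji : j i = i := if_pos ⟨x, hi, hx⟩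
  exact mem_iUnion.mpr ⟨i, by simpa only [Function.comp_apply, hji] using hi⟩

end IsUnionOfSimilarCopies

theorem isSelfSimilar_iff {S : Set ℝ} :
    IsSelfSimilar S ↔ S.Nonempty ∧ IsCompact S ∧ ∃ κ < 1, IsUnionOfSimilarCopies κ S S := by
  constructor
  · rintro ⟨hne, hcpt, n, c, d, -, hc, hS⟩
    obtain ⟨κ, hκ, hcκ⟩ := Finite.exists_lt_forall_le fun i => (hc i).2
    exact ⟨hne, hcpt, κ, hκ, n, c, d, fun i => ⟨(hc i).1, hcκ i⟩, hS⟩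
  · rintro ⟨hne, hcpt, κ, hκ, n, c, d, hc, hS⟩
    have hn : 0 < n := by
      refine Nat.pos_of_ne_zero ?_
      rintro rfl
      obtain ⟨x, hx⟩ := hne
      rw [hS] at hx
      simp at hx
    exact ⟨hne, hcpt, n, c, d, hn, fun i => ⟨(hc i).1, (hc i).2.trans_lt hκ⟩, hS⟩

theorem abs_le_one_of_image_subset {c d : ℝ} {S T : Set ℝ} (hc : c ≠ 0)
    (hST : (fun x => c * x + d) '' T ⊆ S) (hS : Bornology.IsBounded S) (hdiam : diam S ≤ diam T)
    (hpos : 0 < diam S) : |c| ≤ 1 := by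
  have hc' : 0 < |c| := abs_pos.mpr hc
  have hT : diam T ≤ diam S / |c| := by
    refine diam_le_of_forall_dist_le (by positivity) fun x hx y hy => ?_
    rw [le_div_iff₀ hc', mul_comm]
    calc |c| * dist x y = dist (c * x + d) (c * y + d) := (dist_mul_add_mul_add c d x y).symm
      _ ≤ diam S := dist_le_diam_of_mem hS (hST ⟨x, hx, rfl⟩) (hST ⟨y, hy, rfl⟩)
  rw [le_div_iff₀ hc'] at hT
  nlinarith

theorem isUnionOfSimilarCopies_one_of_iUnion_image_eq {n : ℕ} {c d : Fin n → ℝ} {K Λ : Set ℝ}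
    (hc : ∀ q, c q ≠ 0) (hKΛ : ⋃ q, (fun x => c q * x + d q) '' Λ = K)
    (hK : Bornology.IsBounded K) (hdiam : diam K ≤ diam Λ) (hpos : 0 < diam K) :
    IsUnionOfSimilarCopies 1 K Λ :=
  ⟨n, c, d, fun q => ⟨hc q, abs_le_one_of_image_subset (hc q)
    (hKΛ ▸ subset_iUnion (fun q => (fun x => c q * x + d q) '' Λ) q) hK hdiam hpos⟩, hKΛ.symm⟩

theorem exists_ball_sInf_add_disjoint_translates {K : Set ℝ} (hcpt : IsCompact K) {m : ℕ}
    {t : Fin (m + 1) → ℝ} (ht : StrictMono t) : ∃ ε > 0,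
      Disjoint (ball (sInf K + t 0) ε) (⋃ j : {j : Fin (m + 1) // j ≠ 0}, (· + t j) '' K) := by
  have hR : IsClosed (⋃ j : {j : Fin (m + 1) // j ≠ 0}, (· + t j) '' K) :=
    isClosed_iUnion_of_finite fun j => (hcpt.image (by fun_prop)).isClosed
  have hA : sInf K + t 0 ∉ ⋃ j : {j : Fin (m + 1) // j ≠ 0}, (· + t j) '' K := by
    intro hmem
    obtain ⟨⟨j, hj⟩, y, hy, hyA⟩ := mem_iUnion.mp hmem
    have := ht ((Fin.pos_iff_ne_zero' j).mpr hj)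
    linarith [csInf_le hcpt.bddBelow hy, show y + t j = sInf K + t 0 from hyA]
  obtain ⟨ε, hε, hball⟩ := Metric.isOpen_iff.mp hR.isOpen_compl _ hA
  exact ⟨ε, hε, subset_compl_iff_disjoint_right.mp hball⟩

section StrongSeparation

variable {ℓ : ℕ} {r a : Fin ℓ → ℝ} {K : Set ℝ}

theorem isClosed_diff_image_of_pairwise_disjoint (hcpt : IsCompact K)
    (hK : K = ⋃ i, (fun x => r i * x + a i) '' K)
    (hSSC : ∀ i j : Fin ℓ, i ≠ j →
      Disjoint ((fun x => r i * x + a i) '' K) ((fun x => r j * x + a j) '' K)) (i : Fin ℓ) :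
    IsClosed (K \ (fun x => r i * x + a i) '' K) := by
  have hdiff : K \ (fun x => r i * x + a i) '' K =
      ⋃ j : {j // j ≠ i}, (fun x => r j * x + a j) '' K := by
    ext x
    constructor
    · rintro ⟨hxK, hxi⟩
      obtain ⟨j, hj⟩ := mem_iUnion.mp (hK.subset hxK)
      exact mem_iUnion.mpr ⟨⟨j, fun hji => hxi (hji ▸ hj)⟩, hj⟩
    · rintro hx
      obtain ⟨⟨j, hji⟩, hj⟩ := mem_iUnion.mp hx
      exact ⟨hK.symm.subset (mem_iUnion.mpr ⟨j, hj⟩),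
        fun hi => (hSSC j i hji).ne_of_mem hj hi rfl⟩
  rw [hdiff]
  exact isClosed_iUnion_of_finite fun j => (hcpt.image (by fun_prop)).isClosed

theorem exists_cylinder_mem (hr : ∀ i, r i ≠ 0) {κ : ℝ} (hκ : ∀ i, |r i| ≤ κ)
    (hcpt : IsCompact K) (hK : K = ⋃ i, (fun x => r i * x + a i) '' K)
    (hSSC : ∀ i j : Fin ℓ, i ≠ j →
      Disjoint ((fun x => r i * x + a i) '' K) ((fun x => r j * x + a j) '' K))
    {x : ℝ} (hx : x ∈ K) : ∀ k : ℕ, ∃ ρ β : ℝ, ρ ≠ 0 ∧ |ρ| ≤ κ ^ k ∧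
      (fun y => ρ * y + β) '' K ⊆ K ∧ IsClosed (K \ (fun y => ρ * y + β) '' K) ∧
      x ∈ (fun y => ρ * y + β) '' K
  | 0 => ⟨1, 0, one_ne_zero, by simp, by simp, by simp, ⟨x, hx, by simp⟩⟩
  | k + 1 => by
    obtain ⟨ρ, β, hρ, hρκ, hsub, hclosed, y, hy, rfl⟩ := exists_cylinder_mem hr hκ hcpt hK hSSC hx k
    obtain ⟨i, w, hw, rfl⟩ := mem_iUnion.mp (hK.subset hy)
    set φ : ℝ → ℝ := fun y => ρ * y + β
    set f : ℝ → ℝ := fun x => r i * x + a i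
    have hcomp : (fun y => ρ * r i * y + (ρ * a i + β)) '' K = φ '' (f '' K) := by
      rw [image_image]
      exact image_congr fun z _ => by simp only [φ, f]; ring
    have hfK : f '' K ⊆ K := (subset_iUnion (fun i => (fun x => r i * x + a i) '' K) i).trans
      hK.symm.subset
    have hφ : Function.Injective φ := fun u v huv => mul_left_cancel₀ hρ (add_right_cancel huv)
    refine ⟨ρ * r i, ρ * a i + β, mul_ne_zero hρ (hr i), ?_, ?_, ?_, w, hw, by ring⟩
    · rw [abs_mul, pow_succ]
      exact mul_le_mul hρκ (hκ i) (abs_nonneg _) ((abs_nonneg _).trans hρκ)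
    · rw [hcomp]
      exact (image_mono hfK).trans hsub
    · rw [hcomp, ← sdiff_union_sdiff_cancel hsub (image_mono hfK), ← image_sdiff hφ]
      exact hclosed.union (((hcpt.of_isClosed_subset
        (isClosed_diff_image_of_pairwise_disjoint hcpt hK hSSC i) sdiff_subset).image
        (by fun_prop)).isClosed)

theorem exists_cylinder_subset_ball (hr : ∀ i, r i ≠ 0 ∧ |r i| < 1) (hcpt : IsCompact K)
    (hK : K = ⋃ i, (fun x => r i * x + a i) '' K)
    (hSSC : ∀ i j : Fin ℓ, i ≠ j →
      Disjoint ((fun x => r i * x + a i) '' K) ((fun x => r j * x + a j) '' K))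
    {x ε : ℝ} (hx : x ∈ K) (hε : 0 < ε) : ∃ ρ β : ℝ, ρ ≠ 0 ∧
      (fun y => ρ * y + β) '' K ⊆ K ∩ ball x ε ∧ IsClosed (K \ (fun y => ρ * y + β) '' K) ∧
      x ∈ (fun y => ρ * y + β) '' K := by
  obtain ⟨κ, hκ1, hκ⟩ := Finite.exists_lt_forall_le fun i => (hr i).2
  obtain ⟨k, hk⟩ := exists_pow_mul_lt_of_lt_one (diam K) (le_max_right κ 0)
    (max_lt hκ1 one_pos) hε
  obtain ⟨ρ, β, hρ, hρκ, hsub, hclosed, y, hy, rfl⟩ := exists_cylinder_mem (fun i => (hr i).1)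
    (fun i => (hκ i).trans (le_max_left κ 0)) hcpt hK hSSC hx k
  refine ⟨ρ, β, hρ, ?_, hclosed, y, hy, rfl⟩
  rintro _ ⟨w, hw, rfl⟩
  refine ⟨hsub ⟨w, hw, rfl⟩, mem_ball.mpr ?_⟩
  calc dist (ρ * w + β) (ρ * y + β) = |ρ| * dist w y := dist_mul_add_mul_add ρ β w y
    _ ≤ max κ 0 ^ k * diam K :=
        mul_le_mul hρκ (dist_le_diam_of_mem hcpt.isBounded hw hy) dist_nonneg (by positivity)
    _ < ε := hk

theorem exists_similar_copy_separated_in_translates (hr : ∀ i, r i ≠ 0 ∧ |r i| < 1)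
    (hcpt : IsCompact K) (hne : K.Nonempty) (hK : K = ⋃ i, (fun x => r i * x + a i) '' K)
    (hSSC : ∀ i j : Fin ℓ, i ≠ j →
      Disjoint ((fun x => r i * x + a i) '' K) ((fun x => r j * x + a j) '' K))
    {m : ℕ} {t : Fin (m + 1) → ℝ} (ht : StrictMono t) : ∃ ρ β δ : ℝ, ρ ≠ 0 ∧ 0 < δ ∧
      (fun y => ρ * y + β) '' K ⊆ ⋃ j, (· + t j) '' K ∧
      ∀ x ∈ (fun y => ρ * y + β) '' K, ∀ z ∈ ⋃ j, (· + t j) '' K,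
        z ∉ (fun y => ρ * y + β) '' K → δ ≤ dist x z := by
  set R := ⋃ j : {j : Fin (m + 1) // j ≠ 0}, (· + t j) '' K
  have hR : IsClosed R := isClosed_iUnion_of_finite fun j => (hcpt.image (by fun_prop)).isClosed
  obtain ⟨ε, hε, hball⟩ := exists_ball_sInf_add_disjoint_translates hcpt ht
  obtain ⟨ρ, β, hρ, hsub, hclosed, -⟩ :=
    exists_cylinder_subset_ball hr hcpt hK hSSC (hcpt.sInf_mem hne) hε
  set C₀ := (fun y => ρ * y + β) '' K
  set C := (fun y => ρ * y + (β + t 0)) '' K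
  have hC : C = (· + t 0) '' C₀ := by
    rw [image_image]
    exact image_congr fun y _ => by ring
  set F := (· + t 0) '' (K \ C₀) ∪ R
  have hF : IsClosed F := (isClosedMap_add_right (t 0) _ hclosed).union hR
  have hCF : Disjoint C F := by
    refine disjoint_union_right.mpr ⟨?_, hball.mono_left fun x hxC => ?_⟩
    · rw [hC, image_sdiff (add_left_injective (t 0))]
      exact disjoint_sdiff_right
    · obtain ⟨y, hy, rfl⟩ := hC ▸ hxC
      simpa only [mem_ball, dist_add_right] using (hsub hy).2
  have hΛC : (⋃ j, (· + t j) '' K) \ C ⊆ F := by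
    rintro _ ⟨hz, hzC⟩
    obtain ⟨j, y, hy, rfl⟩ := mem_iUnion.mp hz
    rcases eq_or_ne j 0 with rfl | hj
    · exact Or.inl ⟨y, ⟨hy, fun hyC₀ => hzC (hC ▸ ⟨y, hyC₀, rfl⟩)⟩, rfl⟩
    · exact Or.inr (mem_iUnion.mpr ⟨⟨j, hj⟩, y, hy, rfl⟩)
  obtain ⟨δ, hδ, hδsep⟩ := exists_pos_le_dist_of_disjoint (hcpt.image (by fun_prop)) hF hCF
  refine ⟨ρ, β + t 0, δ, hρ, hδ, ?_, fun x hx z hz hzC => hδsep x hx z (hΛC ⟨hz, hzC⟩)⟩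
  show C ⊆ _
  rw [hC]
  exact (image_mono fun y hy => (hsub hy).1).trans (subset_iUnion (fun j => (· + t j) '' K) 0)

theorem stmt_4_general (ℓ : ℕ) (r a : Fin ℓ → ℝ)
    (hr : ∀ i, r i ≠ 0 ∧ |r i| < 1)
    (K : Set ℝ) (hne : K.Nonempty) (hcpt : IsCompact K)
    (hK2 : ∃ x ∈ K, ∃ y ∈ K, x ≠ y)
    (hK : K = ⋃ i, (fun x => r i * x + a i) '' K)
    (hSSC : ∀ i j : Fin ℓ, i ≠ j →
      Disjoint ((fun x => r i * x + a i) '' K) ((fun x => r j * x + a j) '' K))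
    (m : ℕ) (t : Fin (m + 1) → ℝ) (ht : StrictMono t) :
    IsSelfSimilar (⋃ j, (· + t j) '' K) ↔
      ∃ (p : ℕ) (g : Fin p → ℝ → ℝ),
        (∀ q, ∃ c d : ℝ, c ≠ 0 ∧ ∀ x, g q x = c * x + d) ∧
        (⋃ q, g q '' (⋃ j, (· + t j) '' K)) = K := by
  set Λ := ⋃ j, (· + t j) '' K
  have hΛcpt : IsCompact Λ := isCompact_iUnion fun j => hcpt.image (by fun_prop)
  constructor
  · intro hΛ
    obtain ⟨-, -, κ, hκ, hΛκ⟩ := isSelfSimilar_iff.mp hΛ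
    obtain ⟨ρ, β, δ, hρ, hδ, hCΛ, hsep⟩ :=
      exists_similar_copy_separated_in_translates hr hcpt hne hK hSSC ht
    obtain ⟨κ', hκ', hΛκ'⟩ := hΛκ.exists_mul_lt (D := diam Λ) hκ hδ
    obtain ⟨n, c, d, hc, hKΛ⟩ := (IsUnionOfSimilarCopies.of_image β hρ K).trans
      (hΛκ'.of_separated hΛcpt.isBounded hκ' hCΛ (hne.image _) hsep)
    exact ⟨n, fun i x => c i * x + d i, fun i => ⟨c i, d i, (hc i).1, fun _ => rfl⟩, hKΛ.symm⟩
  · rintro ⟨p, g, hg, hgK⟩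
    choose c d hc hcd using hg
    obtain rfl : g = fun q x => c q * x + d q := funext fun q => funext (hcd q)
    have hKΛ : diam K ≤ diam Λ := by
      rw [← (isometry_add_right (t 0)).diam_image]
      exact diam_mono (subset_iUnion (fun j => (· + t j) '' K) 0) hΛcpt.isBounded
    obtain ⟨κ, hκ, hrκ⟩ := Finite.exists_lt_forall_le fun i => (hr i).2
    have hKK : IsUnionOfSimilarCopies κ K K := ⟨ℓ, r, a, fun i => ⟨(hr i).1, hrκ i⟩, hK⟩
    have hΛΛ : IsUnionOfSimilarCopies (1 * κ * 1) Λ Λ :=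
      ((IsUnionOfSimilarCopies.iUnion_add K t).trans hKK).trans
        (isUnionOfSimilarCopies_one_of_iUnion_image_eq hc hgK hcpt.isBounded hKΛ
          (diam_pos hK2 hcpt.isBounded))
    exact isSelfSimilar_iff.mpr ⟨(hne.image _).mono (subset_iUnion (fun j => (· + t j) '' K) 0),
      hΛcpt, _, by simpa using hκ, hΛΛ⟩

theorem stmt_4 (ℓ : ℕ) (hℓ : 0 < ℓ) (r a : Fin ℓ → ℝ)
    (hr : ∀ i, r i ≠ 0 ∧ |r i| < 1)
    (K : Set ℝ) (hne : K.Nonempty) (hcpt : IsCompact K)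
    (hK2 : ∃ x ∈ K, ∃ y ∈ K, x ≠ y)
    (hK : K = ⋃ i, (fun x => r i * x + a i) '' K)
    (hSSC : ∀ i j : Fin ℓ, i ≠ j →
      Disjoint ((fun x => r i * x + a i) '' K) ((fun x => r j * x + a j) '' K))
    (m : ℕ) (t : Fin (m + 1) → ℝ) (ht : StrictMono t) :
    IsSelfSimilar (⋃ j, (· + t j) '' K) ↔
      ∃ (p : ℕ) (g : Fin p → ℝ → ℝ),
        (∀ q, ∃ c d : ℝ, c ≠ 0 ∧ ∀ x, g q x = c * x + d) ∧
        (⋃ q, g q '' (⋃ j, (· + t j) '' K)) = K :=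
  stmt_4_general ℓ r a hr K hne hcpt hK2 hK hSSC m t ht
end StrongSeparation
end

section
/- Let λ_0, λ_1 > 0 with λ_0 + λ_1 < 1 and log λ_0 / log λ_1 irrational, and let K be the attractor of {φ_0(x) = λ_0 x, φ_1(x) = λ_1 x + 1 − λ_1}. Then for any 0 = t_0 < t_1 < ⋯ < t_m, the union ⋃_{j=0}^m (K + t_j) is not a self-similar set. -/
section SSU

variable {lam0 lam1 : ℝ} {K : Set ℝ}

lemma ssu_mem0 (hK : K = (fun x => lam0 * x) '' K ∪ (fun x => lam1 * x + (1 - lam1)) '' K)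
    {x : ℝ} (hx : x ∈ K) : lam0 * x ∈ K := by
  rw [hK]; exact Set.mem_union_left _ ⟨x, hx, rfl⟩

lemma ssu_mem1 (hK : K = (fun x => lam0 * x) '' K ∪ (fun x => lam1 * x + (1 - lam1)) '' K)
    {x : ℝ} (hx : x ∈ K) : lam1 * x + (1 - lam1) ∈ K := by
  rw [hK]; exact Set.mem_union_right _ ⟨x, hx, rfl⟩

lemma ssu_struct (h0 : 0 < lam0) (h1 : 0 < lam1) (hsum : lam0 + lam1 < 1)
    (hne : K.Nonempty) (hcpt : IsCompact K)
    (hK : K = (fun x => lam0 * x) '' K ∪ (fun x => lam1 * x + (1 - lam1)) '' K) :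
    K ⊆ Set.Icc 0 1 ∧ (0:ℝ) ∈ K ∧ (1:ℝ) ∈ K := by
  have hlb : ∀ x ∈ K, sInf K ≤ x := fun x hx => csInf_le hcpt.bddBelow hx
  have hub : ∀ x ∈ K, x ≤ sSup K := fun x hx => le_csSup hcpt.bddAbove hx
  have haK : sInf K ∈ K := hcpt.sInf_mem hne
  have hbK : sSup K ∈ K := hcpt.sSup_mem hne
  obtain ⟨a, ha⟩ : ∃ a, sInf K = a := ⟨_, rfl⟩
  obtain ⟨b, hb⟩ : ∃ b, sSup K = b := ⟨_, rfl⟩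
  rw [ha] at haK hlb
  rw [hb] at hbK hub
  have ha0 : 0 ≤ a := by
    have h := haK
    rw [hK] at h
    rcases h with ⟨x, hx, hax⟩ | ⟨x, hx, hax⟩
    · have hlx := hlb x hx
      simp only at hax
      nlinarith [mul_nonneg h0.le (sub_nonneg.2 hlx)]
    · have hlx := hlb x hx
      simp only at hax
      nlinarith [mul_nonneg h1.le (sub_nonneg.2 hlx)]
  have ha0' : a ≤ 0 := by
    have h := hlb _ (ssu_mem0 hK haK)
    nlinarith
  have hb1 : 1 ≤ b := by
    have h := hub _ (ssu_mem1 hK hbK)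
    by_contra hbc
    push_neg at hbc
    nlinarith [mul_pos (show (0:ℝ) < 1 - lam1 by linarith) (show (0:ℝ) < 1 - b by linarith)]
  have hb1' : b ≤ 1 := by
    have h := hbK
    rw [hK] at h
    rcases h with ⟨x, hx, hax⟩ | ⟨x, hx, hax⟩
    · have hxb := hub x hx
      simp only at hax
      nlinarith [mul_le_mul_of_nonneg_left hxb h0.le, mul_pos h1 (show (0:ℝ) < b by linarith)]
    · have hxb := hub x hx
      simp only at hax
      nlinarith [mul_le_mul_of_nonneg_left hxb h1.le]
  have hIa : a = 0 := le_antisymm ha0' ha0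
  have hIb : b = 1 := le_antisymm hb1' hb1
  refine ⟨fun x hx => ⟨by rw [← hIa]; exact hlb x hx, by rw [← hIb]; exact hub x hx⟩, ?_, ?_⟩
  · rw [← hIa]; exact haK
  · rw [← hIb]; exact hbK

lemma ssu_gap (h0 : 0 < lam0) (h1 : 0 < lam1) (hsum : lam0 + lam1 < 1)
    (hne : K.Nonempty) (hcpt : IsCompact K)
    (hK : K = (fun x => lam0 * x) '' K ∪ (fun x => lam1 * x + (1 - lam1)) '' K)
    {x : ℝ} (hx : x ∈ K) : x ≤ lam0 ∨ 1 - lam1 ≤ x := by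
  obtain ⟨hIcc, -, -⟩ := ssu_struct h0 h1 hsum hne hcpt hK
  rw [hK] at hx
  rcases hx with ⟨y, hy, hyx⟩ | ⟨y, hy, hyx⟩
  · left
    have := (hIcc hy).2
    simp only at hyx
    nlinarith
  · right
    have := (hIcc hy).1
    simp only at hyx
    nlinarith

lemma ssu_botExact (h0 : 0 < lam0) (h1 : 0 < lam1) (hsum : lam0 + lam1 < 1)
    (hne : K.Nonempty) (hcpt : IsCompact K)
    (hK : K = (fun x => lam0 * x) '' K ∪ (fun x => lam1 * x + (1 - lam1)) '' K)
    {x : ℝ} (hx : x ∈ K) (hxle : x ≤ lam0) : ∃ y ∈ K, lam0 * y = x := by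
  obtain ⟨hIcc, -, -⟩ := ssu_struct h0 h1 hsum hne hcpt hK
  rw [hK] at hx
  rcases hx with ⟨y, hy, hyx⟩ | ⟨y, hy, hyx⟩
  · exact ⟨y, hy, hyx⟩
  · exfalso
    have := (hIcc hy).1
    simp only at hyx
    nlinarith

lemma ssu_topExact (h0 : 0 < lam0) (h1 : 0 < lam1) (hsum : lam0 + lam1 < 1)
    (hne : K.Nonempty) (hcpt : IsCompact K)
    (hK : K = (fun x => lam0 * x) '' K ∪ (fun x => lam1 * x + (1 - lam1)) '' K)
    {x : ℝ} (hx : x ∈ K) (hxge : 1 - lam1 ≤ x) : ∃ y ∈ K, lam1 * y + (1 - lam1) = x := by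
  obtain ⟨hIcc, -, -⟩ := ssu_struct h0 h1 hsum hne hcpt hK
  rw [hK] at hx
  rcases hx with ⟨y, hy, hyx⟩ | ⟨y, hy, hyx⟩
  · exfalso
    have := (hIcc hy).2
    simp only at hyx
    nlinarith
  · exact ⟨y, hy, hyx⟩



lemma ssu_GLaux (h0 : 0 < lam0) (h1 : 0 < lam1) (hsum : lam0 + lam1 < 1)
    (hne : K.Nonempty) (hcpt : IsCompact K)
    (hK : K = (fun x => lam0 * x) '' K ∪ (fun x => lam1 * x + (1 - lam1)) '' K) :
    ∀ n : ℕ, ∀ u v : ℝ, 0 ≤ u → v ≤ 1 → (∀ x ∈ K, x ≤ u ∨ v ≤ x) →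
      1 - lam1 - lam0 < v - u → v - u ≤ (max lam0 lam1) ^ n := by
  intro n
  induction n with
  | zero =>
    intro u v hu hv _ _
    rw [pow_zero]
    linarith
  | succ n ih =>
    intro u v hu hv hmiss hlen
    obtain ⟨hIcc, h0K, h1K⟩ := ssu_struct h0 h1 hsum hne hcpt hK
    have hl0 : lam0 < 1 := by linarith
    have hl1 : lam1 < 1 := by linarith
    have hlam0K : lam0 ∈ K := by simpa using ssu_mem0 hK h1K
    have hlam1K : (1 - lam1 : ℝ) ∈ K := by simpa using ssu_mem1 hK h0K
    have hMnn : (0:ℝ) ≤ max lam0 lam1 := le_trans h0.le (le_max_left _ _)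
    rcases hmiss lam0 hlam0K with hA | hA
    · rcases hmiss (1 - lam1) hlam1K with hB | hB
      · -- 1 - lam1 ≤ u : rescale top branch
        have key := ih ((u - (1 - lam1)) / lam1) ((v - (1 - lam1)) / lam1)
          (div_nonneg (by linarith) h1.le)
          ((div_le_one h1).2 (by linarith))
          (by
            intro x hx
            rcases hmiss (lam1 * x + (1 - lam1)) (ssu_mem1 hK hx) with h | h
            · left; rw [le_div_iff₀ h1, mul_comm]; linarith
            · right; rw [div_le_iff₀ h1, mul_comm]; linarith)
          (by
            have h2 : v - u ≤ (v - u) / lam1 := by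
              rw [le_div_iff₀ h1]
              nlinarith
            have h3 : (v - (1 - lam1)) / lam1 - (u - (1 - lam1)) / lam1 = (v - u) / lam1 := by
              ring
            rw [h3]
            linarith)
        have h3 : (v - (1 - lam1)) / lam1 - (u - (1 - lam1)) / lam1 = (v - u) / lam1 := by ring
        rw [h3] at key
        have h4 : v - u ≤ lam1 * (max lam0 lam1) ^ n := by
          rw [div_le_iff₀ h1] at key
          nlinarith [key]
        calc v - u ≤ lam1 * (max lam0 lam1) ^ n := h4
          _ ≤ (max lam0 lam1) * (max lam0 lam1) ^ n := by
              apply mul_le_mul_of_nonneg_right (le_max_right _ _) (pow_nonneg hMnn n)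
          _ = (max lam0 lam1) ^ (n+1) := by rw [pow_succ]; ring
      · -- lam0 ≤ u and v ≤ 1 - lam1 : contradiction with hlen
        exfalso; linarith
    · -- v ≤ lam0 : rescale bottom branch
      have key := ih (u / lam0) (v / lam0)
        (div_nonneg hu h0.le)
        ((div_le_one h0).2 (by linarith))
        (by
          intro x hx
          rcases hmiss (lam0 * x) (ssu_mem0 hK hx) with h | h
          · left; rw [le_div_iff₀ h0, mul_comm]; linarith
          · right; rw [div_le_iff₀ h0, mul_comm]; linarith)
        (by
          have h2 : v - u ≤ (v - u) / lam0 := by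
            rw [le_div_iff₀ h0]
            nlinarith
          have h3 : v / lam0 - u / lam0 = (v - u) / lam0 := by ring
          rw [h3]
          linarith)
      have h3 : v / lam0 - u / lam0 = (v - u) / lam0 := by ring
      rw [h3] at key
      have h4 : v - u ≤ lam0 * (max lam0 lam1) ^ n := by
        rw [div_le_iff₀ h0] at key
        nlinarith [key]
      calc v - u ≤ lam0 * (max lam0 lam1) ^ n := h4
        _ ≤ (max lam0 lam1) * (max lam0 lam1) ^ n := by
            apply mul_le_mul_of_nonneg_right (le_max_left _ _) (pow_nonneg hMnn n)
        _ = (max lam0 lam1) ^ (n+1) := by rw [pow_succ]; ring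

lemma ssu_gapBound (h0 : 0 < lam0) (h1 : 0 < lam1) (hsum : lam0 + lam1 < 1)
    (hne : K.Nonempty) (hcpt : IsCompact K)
    (hK : K = (fun x => lam0 * x) '' K ∪ (fun x => lam1 * x + (1 - lam1)) '' K)
    {u v : ℝ} (hu : 0 ≤ u) (hv : v ≤ 1) (hmiss : ∀ x ∈ K, x ≤ u ∨ v ≤ x) :
    v - u ≤ 1 - lam1 - lam0 := by
  by_contra hcon
  push_neg at hcon
  obtain ⟨n, hn⟩ := exists_pow_lt_of_lt_one (show (0:ℝ) < v - u by linarith)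
    (max_lt (show lam0 < 1 by linarith) (show lam1 < 1 by linarith))
  have := ssu_GLaux h0 h1 hsum hne hcpt hK n u v hu hv hmiss hcon
  linarith

lemma ssu_gapEq (h0 : 0 < lam0) (h1 : 0 < lam1) (hsum : lam0 + lam1 < 1)
    (hne : K.Nonempty) (hcpt : IsCompact K)
    (hK : K = (fun x => lam0 * x) '' K ∪ (fun x => lam1 * x + (1 - lam1)) '' K)
    {u v : ℝ} (hu : 0 ≤ u) (hv : v ≤ 1) (hmiss : ∀ x ∈ K, x ≤ u ∨ v ≤ x)
    (hlen : v - u = 1 - lam1 - lam0) : u = lam0 := by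
  obtain ⟨hIcc, h0K, h1K⟩ := ssu_struct h0 h1 hsum hne hcpt hK
  have hlam0K : lam0 ∈ K := by simpa using ssu_mem0 hK h1K
  have hlam1K : (1 - lam1 : ℝ) ∈ K := by simpa using ssu_mem1 hK h0K
  rcases hmiss lam0 hlam0K with hA | hA
  · rcases hmiss (1 - lam1) hlam1K with hB | hB
    · -- 1 - lam1 ≤ u : top rescale gives longer missing interval: contradiction
      exfalso
      have key := ssu_gapBound h0 h1 hsum hne hcpt hK
        (u := (u - (1 - lam1)) / lam1) (v := (v - (1 - lam1)) / lam1)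
        (div_nonneg (by linarith) h1.le)
        ((div_le_one h1).2 (by linarith))
        (by
          intro x hx
          rcases hmiss (lam1 * x + (1 - lam1)) (ssu_mem1 hK hx) with h | h
          · left; rw [le_div_iff₀ h1, mul_comm]; linarith
          · right; rw [div_le_iff₀ h1, mul_comm]; linarith)
      have h3 : (v - (1 - lam1)) / lam1 - (u - (1 - lam1)) / lam1 = (v - u) / lam1 := by ring
      rw [h3] at key
      have h2 : v - u < (v - u) / lam1 := by
        rw [lt_div_iff₀ h1]
        nlinarith
      linarith
    · linarith
  · -- v ≤ lam0 : bottom rescale contradiction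
    exfalso
    have key := ssu_gapBound h0 h1 hsum hne hcpt hK
      (u := u / lam0) (v := v / lam0)
      (div_nonneg hu h0.le)
      ((div_le_one h0).2 (by linarith))
      (by
        intro x hx
        rcases hmiss (lam0 * x) (ssu_mem0 hK hx) with h | h
        · left; rw [le_div_iff₀ h0, mul_comm]; linarith
        · right; rw [div_le_iff₀ h0, mul_comm]; linarith)
    have h3 : v / lam0 - u / lam0 = (v - u) / lam0 := by ring
    rw [h3] at key
    have h2 : v - u < (v - u) / lam0 := by
      rw [lt_div_iff₀ h0]
      nlinarith
    linarith

lemma ssu_reflFalse (h0 : 0 < lam0) (h1 : 0 < lam1) (hsum : lam0 + lam1 < 1)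
    (hirr : Irrational (Real.log lam0 / Real.log lam1))
    (hne : K.Nonempty) (hcpt : IsCompact K)
    (hK : K = (fun x => lam0 * x) '' K ∪ (fun x => lam1 * x + (1 - lam1)) '' K)
    (hrefl : ∀ x ∈ K, 1 - x ∈ K) : False := by
  have hmiss : ∀ x ∈ K, x ≤ lam1 ∨ 1 - lam0 ≤ x := by
    intro x hx
    rcases ssu_gap h0 h1 hsum hne hcpt hK (hrefl x hx) with h | h
    · right; linarith
    · left; linarith
  have heq := ssu_gapEq h0 h1 hsum hne hcpt hK (u := lam1) (v := 1 - lam0)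
    h1.le (by linarith) hmiss (by ring)
  -- heq : lam1 = lam0
  have hlog : Real.log lam0 ≠ 0 := ne_of_lt (Real.log_neg h0 (by linarith))
  exact hirr ⟨1, by rw [heq, div_self hlog]; norm_num⟩



lemma ssu_rigid_aux (h0 : 0 < lam0) (h1 : 0 < lam1) (hsum : lam0 + lam1 < 1)
    (hirr : Irrational (Real.log lam0 / Real.log lam1))
    (hne : K.Nonempty) (hcpt : IsCompact K)
    (hK : K = (fun x => lam0 * x) '' K ∪ (fun x => lam1 * x + (1 - lam1)) '' K) :
    ∀ n : ℕ, ∀ c d : ℝ, c ≠ 0 → |c| < 1 → (max lam0 lam1) ^ n ≤ |c| →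
      (∀ x ∈ K, c * x + d ∈ K) →
      ∃ A B : ℕ, c = lam0 ^ A * lam1 ^ B ∧ 0 ≤ d ∧ (B = 0 → d = 0) ∧ (0 < B → 0 < d) := by
  intro n
  induction n with
  | zero =>
    intro c d _ hc1 hcn _
    rw [pow_zero] at hcn
    exfalso; linarith
  | succ n ih =>
    intro c d hc hc1 hcn hmap
    obtain ⟨hIcc, h0K, h1K⟩ := ssu_struct h0 h1 hsum hne hcpt hK
    have hl0 : lam0 < 1 := by linarith
    have hl1 : lam1 < 1 := by linarith
    have hMnn : (0:ℝ) ≤ max lam0 lam1 := le_trans h0.le (le_max_left _ _)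
    have hd : d ∈ K := by simpa using hmap 0 h0K
    have hcd : c + d ∈ K := by
      have := hmap 1 h1K
      rwa [mul_one] at this
    have hmnK : min d (c + d) ∈ K := by
      rcases min_cases d (c + d) with ⟨h, -⟩ | ⟨h, -⟩ <;> rw [h] <;> assumption
    have hmxK : max d (c + d) ∈ K := by
      rcases max_cases d (c + d) with ⟨h, -⟩ | ⟨h, -⟩ <;> rw [h] <;> assumption
    have hbound : ∀ x ∈ K, min d (c + d) ≤ c * x + d ∧ c * x + d ≤ max d (c + d) := by
      intro x hx
      obtain ⟨hx0, hx1⟩ := hIcc hx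
      rcases le_or_gt 0 c with h | h
      · constructor
        · nlinarith [min_le_left d (c + d), mul_nonneg h hx0]
        · nlinarith [le_max_right d (c + d), mul_le_mul_of_nonneg_left hx1 h]
      · constructor
        · nlinarith [min_le_right d (c + d), mul_le_mul_of_nonpos_left hx1 h.le]
        · nlinarith [le_max_left d (c + d), mul_nonneg (neg_nonneg.2 h.le) hx0]
    have hwidth : max d (c + d) - min d (c + d) = |c| := by
      rcases le_or_gt 0 c with h | h
      · rw [abs_of_nonneg h, max_eq_right (by linarith), min_eq_left (by linarith)]; ring
      · rw [abs_of_neg h, max_eq_left (by linarith), min_eq_right (by linarith)]; ring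
    have hmn0 : 0 ≤ min d (c + d) := (hIcc hmnK).1
    have hmx1 : max d (c + d) ≤ 1 := (hIcc hmxK).2
    rcases ssu_gap h0 h1 hsum hne hcpt hK hmnK with hmnlo | hmnhi
    · rcases ssu_gap h0 h1 hsum hne hcpt hK hmxK with hmxlo | hmxhi
      · -- bottom case : whole image in [0, lam0]
        have habs : |c| ≤ lam0 := by linarith [hwidth]
        rcases eq_or_lt_of_le habs with heq | hlt
        · rcases (abs_eq h0.le).1 heq with hce | hce
          · -- c = lam0
            have hshift : ∀ x ∈ K, x + d / lam0 ∈ K := by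
              intro x hx
              obtain ⟨y, hy, hye⟩ := ssu_botExact h0 h1 hsum hne hcpt hK (hmap x hx)
                (le_trans (hbound x hx).2 hmxlo)
              have hyv : y = x + d / lam0 := by
                rw [hce] at hye
                field_simp
                linarith
              rwa [← hyv]
            have hd0 : d / lam0 = 0 := by
              have hA := (hIcc (by simpa using hshift 0 h0K)).1
              have hB := (hIcc (hshift 1 h1K)).2
              linarith
            have hdz : d = 0 := by
              field_simp at hd0
              simpa using hd0
            exact ⟨1, 0, by rw [hce]; ring, by rw [hdz], fun _ => hdz, fun h => absurd h (by norm_num)⟩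
          · -- c = -lam0 : reflection, impossible
            exfalso
            have hshift : ∀ x ∈ K, -x + d / lam0 ∈ K := by
              intro x hx
              obtain ⟨y, hy, hye⟩ := ssu_botExact h0 h1 hsum hne hcpt hK (hmap x hx)
                (le_trans (hbound x hx).2 hmxlo)
              have hyv : y = -x + d / lam0 := by
                rw [hce] at hye
                field_simp
                linarith
              rwa [← hyv]
            have hd1 : d / lam0 = 1 := by
              have hA := (hIcc (by simpa using hshift 0 h0K)).2
              have hB := (hIcc (hshift 1 h1K)).1
              linarith
            refine ssu_reflFalse h0 h1 hsum hirr hne hcpt hK (fun x hx => ?_)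
            have := hshift x hx
            rw [hd1] at this
            rwa [neg_add_eq_sub] at this
        · -- |c| < lam0 : recurse via bottom map
          have hc' : c / lam0 ≠ 0 := div_ne_zero hc (ne_of_gt h0)
          have habs' : |c / lam0| = |c| / lam0 := by rw [abs_div, abs_of_pos h0]
          have hmap' : ∀ x ∈ K, (c / lam0) * x + d / lam0 ∈ K := by
            intro x hx
            obtain ⟨y, hy, hye⟩ := ssu_botExact h0 h1 hsum hne hcpt hK (hmap x hx)
              (le_trans (hbound x hx).2 hmxlo)
            have hyv : y = (c / lam0) * x + d / lam0 := by
              field_simp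
              linarith
            rwa [← hyv]
          have hpow : (max lam0 lam1) ^ n ≤ |c / lam0| := by
            rw [habs', le_div_iff₀ h0]
            calc (max lam0 lam1) ^ n * lam0
                ≤ (max lam0 lam1) ^ n * (max lam0 lam1) :=
                  mul_le_mul_of_nonneg_left (le_max_left _ _) (pow_nonneg hMnn n)
              _ = (max lam0 lam1) ^ (n + 1) := (pow_succ _ n).symm
              _ ≤ |c| := hcn
          obtain ⟨A, B, hAB, hd0, hB0, hBp⟩ := ih (c / lam0) (d / lam0) hc'
            (by rw [habs']; exact (div_lt_one h0).2 hlt) hpow hmap'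
          refine ⟨A + 1, B, ?_, ?_, ?_, ?_⟩
          · have hcc : c = lam0 * (c / lam0) := by field_simp
            rw [hcc, hAB]; ring
          · have hdd : d = lam0 * (d / lam0) := by field_simp
            rw [hdd]; exact mul_nonneg h0.le hd0
          · intro hB
            have h2 := hB0 hB
            have hdd : d = lam0 * (d / lam0) := by field_simp
            rw [hdd, h2, mul_zero]
          · intro hB
            have h2 := hBp hB
            have hdd : d = lam0 * (d / lam0) := by field_simp
            rw [hdd]; exact mul_pos h0 h2
      · -- span case : impossible
        exfalso
        have hKcC : IsCompact ((fun x => c * x + d) '' K) :=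
          hcpt.image (by fun_prop)
        have hKcK : (fun x => c * x + d) '' K ⊆ K := by
          rintro - ⟨x, hx, rfl⟩
          exact hmap x hx
        have hmnKc : min d (c + d) ∈ (fun x => c * x + d) '' K := by
          rcases min_cases d (c + d) with ⟨h, -⟩ | ⟨h, -⟩ <;> rw [h]
          · exact ⟨0, h0K, by simp⟩
          · exact ⟨1, h1K, by simp⟩
        have hmxKc : max d (c + d) ∈ (fun x => c * x + d) '' K := by
          rcases max_cases d (c + d) with ⟨h, -⟩ | ⟨h, -⟩ <;> rw [h]
          · exact ⟨0, h0K, by simp⟩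
          · exact ⟨1, h1K, by simp⟩
        have hPcpt : IsCompact ((fun x => c * x + d) '' K ∩ Set.Iic lam0) :=
          hKcC.inter_right isClosed_Iic
        have hQcpt : IsCompact ((fun x => c * x + d) '' K ∩ Set.Ici (1 - lam1)) :=
          hKcC.inter_right isClosed_Ici
        have hPne : ((fun x => c * x + d) '' K ∩ Set.Iic lam0).Nonempty :=
          ⟨_, hmnKc, hmnlo⟩
        have hQne : ((fun x => c * x + d) '' K ∩ Set.Ici (1 - lam1)).Nonempty :=
          ⟨_, hmxKc, hmxhi⟩
        have hpP := hPcpt.sSup_mem hPne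
        have hqQ := hQcpt.sInf_mem hQne
        obtain ⟨hpKc, hple⟩ := hpP
        obtain ⟨hqKc, hqge⟩ := hqQ
        set p := sSup ((fun x => c * x + d) '' K ∩ Set.Iic lam0) with hpdef
        set q := sInf ((fun x => c * x + d) '' K ∩ Set.Ici (1 - lam1)) with hqdef
        obtain ⟨xp, hxpK, hxpe⟩ := hpKc
        obtain ⟨xq, hxqK, hxqe⟩ := hqKc
        simp only at hxpe hxqe
        simp only [Set.mem_Iic] at hple
        simp only [Set.mem_Ici] at hqge
        have hpq : p < q := by linarith
        have hmiss2 : ∀ z ∈ K, z ≤ min xp xq ∨ max xp xq ≤ z := by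
          intro z hz
          by_contra hcon
          push_neg at hcon
          obtain ⟨hz1, hz2⟩ := hcon
          have hfz : c * z + d ∈ (fun x => c * x + d) '' K := ⟨z, hz, rfl⟩
          have hbetween : p < c * z + d ∧ c * z + d < q := by
            rcases lt_or_gt_of_ne hc with hneg | hpos
            · have hxq_lt : xq < xp := by
                by_contra hxx
                push_neg at hxx
                have := mul_le_mul_of_nonpos_left hxx hneg.le
                linarith
              rw [max_eq_left hxq_lt.le] at hz2
              rw [min_eq_right hxq_lt.le] at hz1
              constructor
              · nlinarith [mul_pos (neg_pos.2 hneg) (sub_pos.2 hz2)]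
              · nlinarith [mul_pos (neg_pos.2 hneg) (sub_pos.2 hz1)]
            · have hxp_lt : xp < xq := by
                by_contra hxx
                push_neg at hxx
                have := mul_le_mul_of_nonneg_left hxx hpos.le
                linarith
              rw [max_eq_right hxp_lt.le] at hz2
              rw [min_eq_left hxp_lt.le] at hz1
              constructor
              · nlinarith [mul_pos hpos (sub_pos.2 hz1)]
              · nlinarith [mul_pos hpos (sub_pos.2 hz2)]
          rcases ssu_gap h0 h1 hsum hne hcpt hK (hKcK hfz) with h | h
          · have : c * z + d ≤ p :=
              le_csSup ⟨lam0, fun w hw => hw.2⟩ ⟨hfz, h⟩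
            linarith [hbetween.1]
          · have : q ≤ c * z + d :=
              csInf_le ⟨1 - lam1, fun w hw => hw.2⟩ ⟨hfz, h⟩
            linarith [hbetween.2]
        have hGL := ssu_gapBound h0 h1 hsum hne hcpt hK
          (le_min (hIcc hxpK).1 (hIcc hxqK).1)
          (max_le (hIcc hxpK).2 (hIcc hxqK).2) hmiss2
        have h7 : c * (xq - xp) = q - p := by rw [← hxpe, ← hxqe]; ring
        have hqp : q - p = |c| * (max xp xq - min xp xq) := by
          rw [max_sub_min_eq_abs, ← abs_mul, h7,
            abs_of_nonneg (show (0:ℝ) ≤ q - p by linarith)]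
        have h5 : |c| * (max xp xq - min xp xq) ≤ |c| * (1 - lam1 - lam0) :=
          mul_le_mul_of_nonneg_left hGL (abs_nonneg c)
        have h6 : |c| * (1 - lam1 - lam0) < 1 * (1 - lam1 - lam0) :=
          mul_lt_mul_of_pos_right hc1 (by linarith)
        linarith
    · -- top case : whole image in [1 - lam1, 1]
      have habs : |c| ≤ lam1 := by linarith [hwidth]
      rcases eq_or_lt_of_le habs with heq | hlt
      · rcases (abs_eq h1.le).1 heq with hce | hce
        · -- c = lam1
          have hshift : ∀ x ∈ K, x + (d - (1 - lam1)) / lam1 ∈ K := by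
            intro x hx
            obtain ⟨y, hy, hye⟩ := ssu_topExact h0 h1 hsum hne hcpt hK (hmap x hx)
              (le_trans hmnhi (hbound x hx).1)
            have hyv : y = x + (d - (1 - lam1)) / lam1 := by
              rw [hce] at hye
              field_simp
              linarith
            rwa [← hyv]
          have he0 : (d - (1 - lam1)) / lam1 = 0 := by
            have hA := (hIcc (by simpa using hshift 0 h0K)).1
            have hB := (hIcc (hshift 1 h1K)).2
            linarith
          have hdeq : d = 1 - lam1 := by
            field_simp at he0
            linarith
          refine ⟨0, 1, by rw [hce]; ring, by linarith, fun h => absurd h one_ne_zero, fun _ => by linarith⟩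
        · -- c = -lam1 : reflection impossible
          exfalso
          have hshift : ∀ x ∈ K, -x + (d - (1 - lam1)) / lam1 ∈ K := by
            intro x hx
            obtain ⟨y, hy, hye⟩ := ssu_topExact h0 h1 hsum hne hcpt hK (hmap x hx)
              (le_trans hmnhi (hbound x hx).1)
            have hyv : y = -x + (d - (1 - lam1)) / lam1 := by
              rw [hce] at hye
              field_simp
              linarith
            rwa [← hyv]
          have hd1 : (d - (1 - lam1)) / lam1 = 1 := by
            have hA := (hIcc (by simpa using hshift 0 h0K)).2
            have hB := (hIcc (hshift 1 h1K)).1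
            linarith
          refine ssu_reflFalse h0 h1 hsum hirr hne hcpt hK (fun x hx => ?_)
          have := hshift x hx
          rw [hd1] at this
          rwa [neg_add_eq_sub] at this
      · -- |c| < lam1 : recurse via top map
        have hc' : c / lam1 ≠ 0 := div_ne_zero hc (ne_of_gt h1)
        have habs' : |c / lam1| = |c| / lam1 := by rw [abs_div, abs_of_pos h1]
        have hmap' : ∀ x ∈ K, (c / lam1) * x + (d - (1 - lam1)) / lam1 ∈ K := by
          intro x hx
          obtain ⟨y, hy, hye⟩ := ssu_topExact h0 h1 hsum hne hcpt hK (hmap x hx)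
            (le_trans hmnhi (hbound x hx).1)
          have hyv : y = (c / lam1) * x + (d - (1 - lam1)) / lam1 := by
            field_simp
            linarith
          rwa [← hyv]
        have hpow : (max lam0 lam1) ^ n ≤ |c / lam1| := by
          rw [habs', le_div_iff₀ h1]
          calc (max lam0 lam1) ^ n * lam1
              ≤ (max lam0 lam1) ^ n * (max lam0 lam1) :=
                mul_le_mul_of_nonneg_left (le_max_right _ _) (pow_nonneg hMnn n)
            _ = (max lam0 lam1) ^ (n + 1) := (pow_succ _ n).symm
            _ ≤ |c| := hcn
        obtain ⟨A, B, hAB, hd0, hB0, hBp⟩ := ih (c / lam1) ((d - (1 - lam1)) / lam1) hc'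
          (by rw [habs']; exact (div_lt_one h1).2 hlt) hpow hmap'
        refine ⟨A, B + 1, ?_, ?_, ?_, ?_⟩
        · have hcc : c = lam1 * (c / lam1) := by field_simp
          rw [hcc, hAB]; ring
        · have hdd : d = lam1 * ((d - (1 - lam1)) / lam1) + (1 - lam1) := by field_simp; ring
          rw [hdd]
          linarith [mul_nonneg h1.le hd0]
        · intro hB
          exact absurd hB (Nat.succ_ne_zero B)
        · intro _
          have hdd : d = lam1 * ((d - (1 - lam1)) / lam1) + (1 - lam1) := by field_simp; ring
          rw [hdd]
          linarith [mul_nonneg h1.le hd0]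

lemma ssu_rigid (h0 : 0 < lam0) (h1 : 0 < lam1) (hsum : lam0 + lam1 < 1)
    (hirr : Irrational (Real.log lam0 / Real.log lam1))
    (hne : K.Nonempty) (hcpt : IsCompact K)
    (hK : K = (fun x => lam0 * x) '' K ∪ (fun x => lam1 * x + (1 - lam1)) '' K)
    {c d : ℝ} (hc : c ≠ 0) (hc1 : |c| < 1)
    (hmap : ∀ x ∈ K, c * x + d ∈ K) :
    ∃ A B : ℕ, c = lam0 ^ A * lam1 ^ B ∧ 0 ≤ d ∧ (B = 0 → d = 0) ∧ (0 < B → 0 < d) := by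
  obtain ⟨n, hn⟩ := exists_pow_lt_of_lt_one (abs_pos.2 hc)
    (max_lt (show lam0 < 1 by linarith) (show lam1 < 1 by linarith))
  exact ssu_rigid_aux h0 h1 hsum hirr hne hcpt hK n c d hc hc1 hn.le hmap

end SSU

theorem stmt_8 (lam0 lam1 : ℝ) (h0 : 0 < lam0) (h1 : 0 < lam1) (hsum : lam0 + lam1 < 1)
    (hirr : Irrational (Real.log lam0 / Real.log lam1))
    (K : Set ℝ) (hne : K.Nonempty) (hcpt : IsCompact K)
    (hK : K = (fun x => lam0 * x) '' K ∪ (fun x => lam1 * x + (1 - lam1)) '' K)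
    (m : ℕ) (hm : 1 ≤ m) (t : Fin (m + 1) → ℝ) (ht0 : t 0 = 0) (ht : StrictMono t) :
    ¬ IsSelfSimilar (⋃ j, (· + t j) '' K) := by
  intro hSS
  obtain ⟨hSne, hScpt, n, r, av, hn, hra, hSeq⟩ := hSS
  obtain ⟨hIcc, h0K, h1K⟩ := ssu_struct h0 h1 hsum hne hcpt hK
  have hl0 : lam0 < 1 := by linarith
  have hl1 : lam1 < 1 := by linarith
  have hm1 : 1 < m + 1 := by omega
  set i1 : Fin (m + 1) := ⟨1, hm1⟩ with hi1
  have ht1pos : 0 < t i1 := by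
    have h01 : (0 : Fin (m + 1)) < i1 := by
      rw [Fin.lt_def]
      simp [hi1]
    have := ht h01
    rwa [ht0] at this
  -- basic facts about S
  have hKS : ∀ x ∈ K, x ∈ ⋃ j, (· + t j) '' K := by
    intro x hx
    refine Set.mem_iUnion.2 ⟨0, ⟨x, hx, ?_⟩⟩
    simp [ht0]
  have hSK : ∀ x ∈ ⋃ j, (· + t j) '' K, x < t i1 → x ∈ K := by
    intro x hx hxlt
    simp only [Set.mem_iUnion, Set.mem_image] at hx
    obtain ⟨j, y, hy, hyx⟩ := hx
    by_cases hj : j = 0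
    · rw [hj, ht0, add_zero] at hyx
      rwa [← hyx]
    · exfalso
      have hjv : (j : ℕ) ≠ 0 := by intro h; exact hj (Fin.ext (by rw [h]; simp))
      have hj1 : i1 ≤ j := by
        rw [Fin.le_def]
        simp [hi1]
        omega
      have h2 := ht.monotone hj1
      have hy0 := (hIcc hy).1
      linarith [hyx.ge, hyx.le]
  have hMS : (1 + t (Fin.last m)) ∈ ⋃ j, (· + t j) '' K :=
    Set.mem_iUnion.2 ⟨Fin.last m, ⟨1, h1K, rfl⟩⟩
  have hSbdd : ∀ x ∈ ⋃ j, (· + t j) '' K, 0 ≤ x ∧ x ≤ 1 + t (Fin.last m) := by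
    intro x hx
    simp only [Set.mem_iUnion, Set.mem_image] at hx
    obtain ⟨j, y, hy, hyx⟩ := hx
    obtain ⟨hy0, hy1⟩ := hIcc hy
    have h1' : t 0 ≤ t j := ht.monotone (Fin.zero_le j)
    have h2' : t j ≤ t (Fin.last m) := ht.monotone (Fin.le_last j)
    rw [ht0] at h1'
    constructor <;> linarith [hyx.ge, hyx.le]
  have h0S : (0 : ℝ) ∈ ⋃ j, (· + t j) '' K := hKS 0 h0K
  -- find the map covering 0
  have h0S' := h0S
  rw [hSeq] at h0S'
  obtain ⟨i, hi⟩ := Set.mem_iUnion.1 h0S'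
  obtain ⟨y, hyS, hy0⟩ := hi
  simp only at hy0
  have hfi : ∀ x ∈ ⋃ j, (· + t j) '' K, r i * x + av i ∈ ⋃ j, (· + t j) '' K := by
    intro x hx
    rw [hSeq]
    exact Set.mem_iUnion.2 ⟨i, ⟨x, hx, rfl⟩⟩
  obtain ⟨hrne, hrabs⟩ := hra i
  rcases lt_trichotomy (r i) 0 with hneg | hzero | hpos
  · -- reversing map: impossible by rigidity (slopes of word maps are positive)
    have hMval : r i * (1 + t (Fin.last m)) + av i = 0 := by
      have hup := (hSbdd _ (hfi _ hMS)).1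
      have hyM := (hSbdd y hyS).2
      have hmul := mul_le_mul_of_nonpos_left hyM hneg.le
      linarith [hy0]
    have topIter : ∀ jj : ℕ, ∀ x ∈ K, lam1 ^ jj * x + (1 - lam1 ^ jj) ∈ K := by
      intro jj
      induction jj with
      | zero => intro x hx; simpa using hx
      | succ jj ihj =>
        intro x hx
        have h2 := ssu_mem1 hK (ihj x hx)
        have heq : lam1 * (lam1 ^ jj * x + (1 - lam1 ^ jj)) + (1 - lam1) =
            lam1 ^ (jj + 1) * x + (1 - lam1 ^ (jj + 1)) := by ring
        rwa [heq] at h2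
    obtain ⟨j, hj⟩ := exists_pow_lt_of_lt_one (div_pos ht1pos (neg_pos.2 hneg)) hl1
    have hjlt : lam1 ^ j * (-r i) < t i1 := (lt_div_iff₀ (neg_pos.2 hneg)).1 hj
    have hmapv : ∀ x ∈ K, (r i * lam1 ^ j) * x + (-(r i * lam1 ^ j)) ∈ K := by
      intro x hx
      have hz := topIter j x hx
      have hzS : (lam1 ^ j * x + (1 - lam1 ^ j)) + t (Fin.last m) ∈ ⋃ j, (· + t j) '' K :=
        Set.mem_iUnion.2 ⟨Fin.last m, ⟨_, hz, rfl⟩⟩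
      have hw := hfi _ hzS
      have ha : av i = -(r i * (1 + t (Fin.last m))) := by linarith
      have heq : r i * ((lam1 ^ j * x + (1 - lam1 ^ j)) + t (Fin.last m)) + av i =
          (r i * lam1 ^ j) * x + (-(r i * lam1 ^ j)) := by
        rw [ha]; ring
      rw [heq] at hw
      apply hSK _ hw
      have hx01 := hIcc hx
      nlinarith [mul_nonneg (mul_nonneg (neg_nonneg.2 hneg.le) (pow_pos h1 j).le) hx01.1]
    have hcneg : r i * lam1 ^ j < 0 := mul_neg_of_neg_of_pos hneg (pow_pos h1 j)
    have hcabs : |r i * lam1 ^ j| < 1 := by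
      rw [abs_mul, abs_of_pos (pow_pos h1 j)]
      have hp1 : lam1 ^ j ≤ 1 := pow_le_one₀ h1.le hl1.le
      nlinarith [abs_nonneg (r i)]
    obtain ⟨A, B, hAB, -, -, -⟩ := ssu_rigid h0 h1 hsum hirr hne hcpt hK hcneg.ne hcabs hmapv
    have : 0 < r i * lam1 ^ j := by
      rw [hAB]
      exact mul_pos (pow_pos h0 A) (pow_pos h1 B)
    linarith
  · exact hrne hzero
  · -- orientation preserving: fixes 0, ratio rho = r i
    have ha0 : av i = 0 := by
      have hup : 0 ≤ av i := by
        have := hfi 0 h0S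
        rw [mul_zero, zero_add] at this
        exact (hSbdd _ this).1
      have hy' := (hSbdd y hyS).1
      nlinarith [mul_nonneg hpos.le hy', hy0]
    have hscale : ∀ x ∈ ⋃ j, (· + t j) '' K, r i * x ∈ ⋃ j, (· + t j) '' K := by
      intro x hx
      have := hfi x hx
      rwa [ha0, add_zero] at this
    have hpowS : ∀ k : ℕ, ∀ x ∈ ⋃ j, (· + t j) '' K, (r i) ^ k * x ∈ ⋃ j, (· + t j) '' K := by
      intro k
      induction k with
      | zero => intro x hx; simpa using hx
      | succ k ihk =>
        intro x hx
        have h2 : (r i) ^ (k + 1) * x = r i * ((r i) ^ k * x) := by ring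
        rw [h2]
        exact hscale _ (ihk x hx)
    have hrlt1 : r i < 1 := by rwa [abs_of_pos hpos] at hrabs
    obtain ⟨k, hk⟩ := exists_pow_lt_of_lt_one
      (div_pos ht1pos (show (0:ℝ) < 1 + t i1 by linarith)) hrlt1
    have hklt : (r i) ^ k * (1 + t i1) < t i1 :=
      (lt_div_iff₀ (show (0:ℝ) < 1 + t i1 by linarith)).1 hk
    have hrkpos : 0 < (r i) ^ k := pow_pos hpos k
    have hrk1 : (r i) ^ k < 1 := by
      have hq : t i1 / (1 + t i1) < 1 := (div_lt_one (by linarith)).2 (by linarith)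
      linarith
    have hrklt : (r i) ^ k < t i1 := by nlinarith
    -- copy 1 : rho^k * K ⊆ K
    have hmap1 : ∀ x ∈ K, (r i) ^ k * x + 0 ∈ K := by
      intro x hx
      rw [add_zero]
      have h2 := hpowS k x (hKS x hx)
      apply hSK _ h2
      obtain ⟨hxa, hxb⟩ := hIcc hx
      nlinarith [mul_le_mul_of_nonneg_left hxb hrkpos.le]
    obtain ⟨A1, B1, hA1, -, -, hB1pos⟩ := ssu_rigid h0 h1 hsum hirr hne hcpt hK
      hrkpos.ne' (by rwa [abs_of_pos hrkpos]) hmap1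
    have hB1 : B1 = 0 := by
      rcases Nat.eq_zero_or_pos B1 with h | h
      · exact h
      · exact absurd (hB1pos h) (by norm_num)
    rw [hB1, pow_zero, mul_one] at hA1
    -- copy 2 : rho^k * (K + t i1) ⊆ K
    have hmap2 : ∀ x ∈ K, (r i) ^ k * x + (r i) ^ k * t i1 ∈ K := by
      intro x hx
      have hxtS : x + t i1 ∈ ⋃ j, (· + t j) '' K :=
        Set.mem_iUnion.2 ⟨i1, ⟨x, hx, rfl⟩⟩
      have h2 := hpowS k _ hxtS
      have heq : (r i) ^ k * x + (r i) ^ k * t i1 = (r i) ^ k * (x + t i1) := by ring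
      rw [heq]
      apply hSK _ h2
      obtain ⟨hxa, hxb⟩ := hIcc hx
      nlinarith [mul_le_mul_of_nonneg_left (show x + t i1 ≤ 1 + t i1 by linarith) hrkpos.le]
    obtain ⟨A2, B2, hA2, -, hB2z, -⟩ := ssu_rigid h0 h1 hsum hirr hne hcpt hK
      hrkpos.ne' (by rwa [abs_of_pos hrkpos]) hmap2
    have hB2 : B2 ≠ 0 := by
      intro h
      have h2 := hB2z h
      nlinarith [mul_pos hrkpos ht1pos]
    -- lam0 ^ A1 = lam0 ^ A2 * lam1 ^ B2 with B2 ≥ 1 : contradicts irrationality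
    have hkey : lam0 ^ A1 = lam0 ^ A2 * lam1 ^ B2 := by rw [← hA1, hA2]
    have hlog := congrArg Real.log hkey
    rw [Real.log_pow, Real.log_mul (pow_ne_zero _ h0.ne') (pow_ne_zero _ h1.ne'),
      Real.log_pow, Real.log_pow] at hlog
    have hL1 : Real.log lam1 ≠ 0 := ne_of_lt (Real.log_neg h1 hl1)
    have hA12 : A1 ≠ A2 := by
      intro h
      rw [h] at hlog
      have h2 : (B2 : ℝ) * Real.log lam1 = 0 := by linarith
      rcases mul_eq_zero.1 h2 with h' | h'
      · exact hB2 (by exact_mod_cast h')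
      · exact hL1 h'
    have hden : (A1 : ℝ) - (A2 : ℝ) ≠ 0 := by
      refine sub_ne_zero.2 ?_
      exact_mod_cast hA12
    refine hirr ⟨(B2 : ℚ) / ((A1 : ℚ) - (A2 : ℚ)), ?_⟩
    push_cast
    rw [div_eq_div_iff hden hL1]
    linarith
end

section
/- Let 0 < λ < (√5 − 1)/2 and let K be the attractor of the IFS {f_1(x) = λx, f_2(x) = λ²x + 1 − λ²}. Then K ∪ (K + λ^{−2} − 1) is the attractor of the IFS {g_1(x) = λ²x, g_2(x) = λ³x, g_3(x) = λ²x + λ^{−2} − 1, g_4(x) = λ³x + λ^{−2} − 1}; in particular K ∪ (K + λ^{−2} − 1) is a self-similar set. -/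
open Set

theorem Set.image_image_union_image_eq_of_eq_image_union {α : Type*} {f g : α → α}
    {K : Set α} (hK : K = f '' K ∪ g '' K) :
    f '' (f '' K) ∪ g '' K ∪ f '' (f '' (f '' K) ∪ g '' K) = K := by
  have hfK : f '' K ⊆ K := fun x hx => by rw [hK]; exact Or.inl hx
  have hf_union : f '' (f '' K) ∪ f '' (g '' K) = f '' K := by rw [← image_union, ← hK]
  calc f '' (f '' K) ∪ g '' K ∪ f '' (f '' (f '' K) ∪ g '' K)
      = (f '' (f '' K) ∪ f '' (g '' K)) ∪ g '' K ∪ f '' (f '' (f '' K)) := by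
        rw [image_union]; ac_rfl
    _ = K := by
        rw [hf_union, ← hK, union_eq_left]
        exact (image_mono (image_mono hfK)).trans ((image_mono hfK).trans hfK)

section Field

variable {𝕜 : Type*} [Field 𝕜]

theorem image_mul_sq_union_image_add {lam : 𝕜} (hlam : lam ≠ 0) (K : Set 𝕜) :
    (fun x => lam ^ 2 * x) '' (K ∪ (fun x => x + (lam ^ 2)⁻¹ - 1) '' K) =
      (fun x => lam * x) '' ((fun x => lam * x) '' K) ∪
        (fun x => lam ^ 2 * x + (1 - lam ^ 2)) '' K := by
  rw [image_union, image_image, image_image]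
  congr 1 <;> refine image_congr fun x _ => ?_
  · ring
  · field_simp
    ring

theorem image_mul_add_union_image_mul_add (a b t : 𝕜) (S : Set 𝕜) :
    (fun x => a * x + t) '' S ∪ (fun x => b * x + t) '' S =
      (fun x => x + t) '' ((fun x => a * x) '' S ∪ (fun x => b * x) '' S) := by
  rw [image_union, image_image, image_image]

end Field

theorem isSelfSimilar_of_eq_union_four {S : Set ℝ} (hne : S.Nonempty) (hcpt : IsCompact S)
    {r s t : ℝ} (hr : r ≠ 0 ∧ |r| < 1) (hs : s ≠ 0 ∧ |s| < 1)
    (hS : S = (fun x => r * x) '' S ∪ (fun x => s * x) '' S ∪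
      (fun x => r * x + t) '' S ∪ (fun x => s * x + t) '' S) :
    IsSelfSimilar S := by
  refine ⟨hne, hcpt, 4, ![r, s, r, s], ![0, 0, t, t], by norm_num, ?_, ?_⟩
  · intro i
    fin_cases i <;> assumption
  · conv_lhs => rw [hS]
    ext x
    simp [Fin.exists_fin_succ, or_assoc]

theorem stmt_10 (lam : ℝ) (hlam : 0 < lam ∧ lam < (Real.sqrt 5 - 1) / 2)
    (K : Set ℝ) (hne : K.Nonempty) (hcpt : IsCompact K)
    (hK : K = (fun x => lam * x) '' K ∪ (fun x => lam ^ 2 * x + (1 - lam ^ 2)) '' K) :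
    (K ∪ (fun x => x + (lam ^ 2)⁻¹ - 1) '' K) =
        (fun x => lam ^ 2 * x) '' (K ∪ (fun x => x + (lam ^ 2)⁻¹ - 1) '' K) ∪
        (fun x => lam ^ 3 * x) '' (K ∪ (fun x => x + (lam ^ 2)⁻¹ - 1) '' K) ∪
        (fun x => lam ^ 2 * x + ((lam ^ 2)⁻¹ - 1)) '' (K ∪ (fun x => x + (lam ^ 2)⁻¹ - 1) '' K) ∪
        (fun x => lam ^ 3 * x + ((lam ^ 2)⁻¹ - 1)) '' (K ∪ (fun x => x + (lam ^ 2)⁻¹ - 1) '' K) ∧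
      IsSelfSimilar (K ∪ (fun x => x + (lam ^ 2)⁻¹ - 1) '' K) := by
  obtain ⟨hpos, hlt⟩ := hlam
  have hlt1 : lam < 1 := by
    have : Real.sqrt 5 < 3 := by
      rw [Real.sqrt_lt' (by norm_num)]
      norm_num
    linarith
  set L := K ∪ (fun x => x + (lam ^ 2)⁻¹ - 1) '' K
  have hcube : (fun x => lam ^ 3 * x) = (fun x => lam * x) ∘ (fun x => lam ^ 2 * x) := by
    ext x
    simp only [Function.comp_apply]
    ring
  have hlower : (fun x => lam ^ 2 * x) '' L ∪ (fun x => lam ^ 3 * x) '' L = K := by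
    rw [hcube, image_comp, image_mul_sq_union_image_add hpos.ne']
    exact image_image_union_image_eq_of_eq_image_union hK
  have htrans : (fun x : ℝ => x + (lam ^ 2)⁻¹ - 1) = (fun x => x + ((lam ^ 2)⁻¹ - 1)) := by
    ext x
    exact add_sub_assoc _ _ _
  have hfix : L = (fun x => lam ^ 2 * x) '' L ∪ (fun x => lam ^ 3 * x) '' L ∪
      (fun x => lam ^ 2 * x + ((lam ^ 2)⁻¹ - 1)) '' L ∪
      (fun x => lam ^ 3 * x + ((lam ^ 2)⁻¹ - 1)) '' L := by
    rw [union_assoc _ ((fun x => lam ^ 2 * x + ((lam ^ 2)⁻¹ - 1)) '' L),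
      image_mul_add_union_image_mul_add, hlower, ← htrans]
  have hcontr : ∀ n ≠ 0, lam ^ n ≠ 0 ∧ |lam ^ n| < 1 := fun n hn =>
    ⟨pow_ne_zero n hpos.ne', by
      rw [abs_of_pos (pow_pos hpos n)]
      exact pow_lt_one₀ hpos.le hlt1 hn⟩
  refine ⟨hfix, isSelfSimilar_of_eq_union_four (hne.mono subset_union_left)
    (hcpt.union (hcpt.image (by fun_prop))) (hcontr 2 two_ne_zero) (hcontr 3 three_ne_zero) hfix⟩
end

section
/- Let N ∈ ℕ and n ∈ ℕ. The equation Nx + Nx² + ⋯ + Nxⁿ + 2N(x^{n+1} + x^{n+2} + ⋯) = 1, equivalently (N+1)x + Nx^{n+1} = 1, has a unique root β_n in the interval (0, 1/(N+1)). Moreover the sequence (β_n) is strictly increasing and converges to 1/(N+1) as n → ∞. -/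
theorem stmt_11 (N : ℕ) (hN : 0 < N) :
    (∀ n : ℕ, 1 ≤ n → ∃! β : ℝ,
      (0 < β ∧ β < 1 / ((N : ℝ) + 1)) ∧ ((N : ℝ) + 1) * β + (N : ℝ) * β ^ (n + 1) = 1) ∧
    ∀ b : ℕ → ℝ,
      (∀ n : ℕ, 1 ≤ n →
        (0 < b n ∧ b n < 1 / ((N : ℝ) + 1)) ∧
          ((N : ℝ) + 1) * b n + (N : ℝ) * (b n) ^ (n + 1) = 1) →
      (∀ p q : ℕ, 1 ≤ p → p < q → b p < b q) ∧
        Filter.Tendsto b Filter.atTop (nhds (1 / ((N : ℝ) + 1))) := by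
  have hN1 : (0:ℝ) < (N:ℝ) + 1 := by positivity
  have hNpos : (0:ℝ) < (N:ℝ) := by exact_mod_cast hN
  set L : ℝ := 1 / ((N : ℝ) + 1) with hL
  have hLpos : 0 < L := by positivity
  -- strict monotonicity of g n on [0, ∞)
  have gmono : ∀ n : ℕ, ∀ a c : ℝ, 0 ≤ a → a < c →
      ((N : ℝ) + 1) * a + (N : ℝ) * a ^ (n + 1) < ((N : ℝ) + 1) * c + (N : ℝ) * c ^ (n + 1) := by
    intro n a c ha hac
    have h1 : ((N:ℝ)+1) * a < ((N:ℝ)+1) * c := by nlinarith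
    have h2 : a ^ (n+1) ≤ c ^ (n+1) := pow_le_pow_left₀ ha hac.le _
    nlinarith
  constructor
  · intro n hn
    set g : ℝ → ℝ := fun β => ((N : ℝ) + 1) * β + (N : ℝ) * β ^ (n + 1) with hg
    have hcont : ContinuousOn g (Set.Icc 0 L) := by fun_prop
    have hg0 : g 0 = 0 := by simp [hg]
    have hgL : g L = 1 + (N:ℝ) * L ^ (n+1) := by
      simp [hg, hL]
      field_simp
    have h1mem : (1:ℝ) ∈ Set.Ioo (g 0) (g L) := by
      constructor
      · rw [hg0]; norm_num
      · rw [hgL]; nlinarith [pow_pos hLpos (n+1)]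
    have := intermediate_value_Ioo (le_of_lt hLpos) hcont h1mem
    obtain ⟨β, hβmem, hβeq⟩ := this
    refine ⟨β, ⟨⟨hβmem.1, hβmem.2⟩, hβeq⟩, ?_⟩
    rintro y ⟨⟨hy0, hyL⟩, hyeq⟩
    by_contra hne
    rcases lt_or_gt_of_ne hne with h | h
    · have := gmono n y β hy0.le h
      simp only [hg] at hβeq hyeq
      nlinarith
    · have := gmono n β y hβmem.1.le h
      simp only [hg] at hβeq hyeq
      nlinarith
  · intro b hb
    constructor
    · intro p q hp hpq
      obtain ⟨⟨hbp0, hbpL⟩, hbpeq⟩ := hb p hp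
      obtain ⟨⟨hbq0, hbqL⟩, hbqeq⟩ := hb q (le_trans hp hpq.le)
      have hbq1 : b q < 1 := lt_of_lt_of_le hbqL (by
        rw [hL]
        rw [div_le_one hN1]
        linarith)
      have hpow : (b q) ^ (q+1) < (b q) ^ (p+1) :=
        pow_lt_pow_right_of_lt_one₀ hbq0 hbq1 (by omega)
      -- g_p (b q) > 1 = g_p (b p), g_p strict mono ⇒ b p < b q
      by_contra hle
      push_neg at hle
      rcases eq_or_lt_of_le hle with heq | hlt
      · rw [heq] at hbqeq hpow
        nlinarith
      · have := gmono p (b q) (b p) hbq0.le hlt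
        nlinarith
    · have key : ∀ n : ℕ, 1 ≤ n → b n = L - ((N:ℝ)/((N:ℝ)+1)) * (b n) ^ (n+1) := by
        intro n hn
        obtain ⟨⟨h0, hL'⟩, heq⟩ := hb n hn
        rw [hL]
        field_simp
        linarith
      have hpow0 : Filter.Tendsto (fun n => (b n) ^ (n+1)) Filter.atTop (nhds 0) := by
        have hhalf : L ≤ 1/2 := by
          rw [hL, div_le_div_iff₀ hN1 (by norm_num)]
          have : (1:ℝ) ≤ (N:ℝ) := by exact_mod_cast hN
          linarith
        apply squeeze_zero' (g := fun n => (1/2:ℝ) ^ (n+1))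
        · filter_upwards [Filter.eventually_ge_atTop 1] with n hn
          exact pow_nonneg ((hb n hn).1.1).le _
        · filter_upwards [Filter.eventually_ge_atTop 1] with n hn
          obtain ⟨⟨h0, hL'⟩, _⟩ := hb n hn
          exact pow_le_pow_left₀ h0.le (by linarith) _
        · have := tendsto_pow_atTop_nhds_zero_of_lt_one (by norm_num : (0:ℝ) ≤ 1/2) (by norm_num : (1/2:ℝ) < 1)
          exact this.comp (Filter.tendsto_add_atTop_nat 1)
      have : Filter.Tendsto (fun n => L - ((N:ℝ)/((N:ℝ)+1)) * (b n) ^ (n+1)) Filter.atTop (nhds L) := by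
        have : Filter.Tendsto (fun n => ((N:ℝ)/((N:ℝ)+1)) * (b n) ^ (n+1)) Filter.atTop (nhds 0) := by
          simpa using hpow0.const_mul ((N:ℝ)/((N:ℝ)+1))
        simpa using (tendsto_const_nhds.sub this)
      refine this.congr' ?_
      filter_upwards [Filter.eventually_ge_atTop 1] with n hn
      exact (key n hn).symm
end

section
/- Let N ∈ ℕ, 0 < β < 1/(N+1), and let Γ be the attractor of {φ_i(x) = βx + i(1−β)/N : i ∈ Ω}, Ω = {0,…,N}. Let 0 = t_0 < t_1 < ⋯ < t_m and Γ_t = ⋃_{j=0}^m (Γ + t_j). If there exist finite sets ℐ_1, ℐ_2 of finite words over Ω such that ⋃_{i∈ℐ_1} φ_i(Γ_t) ∪ ⋃_{i∈ℐ_2} φ_i(1 − Γ_t) = Γ, then Γ_t is a self-similar set. -/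
/-- The composition `φ_{i₁} ∘ ⋯ ∘ φ_{iₙ}` associated to a word `w = i₁…iₙ`. -/
def iterWord {ℓ : ℕ} (f : Fin ℓ → ℝ → ℝ) (w : List (Fin ℓ)) : ℝ → ℝ :=
  w.foldr (fun i g => f i ∘ g) id

/-- The IFS maps `φ_i(x) = βx + i(1−β)/N` for `i ∈ {0,…,N}`. -/
noncomputable def phiFam (N : ℕ) (β : ℝ) : Fin (N + 1) → ℝ → ℝ :=
  fun i x => β * x + (i.1 : ℝ) * (1 - β) / N

noncomputable def cWord (N : ℕ) (β : ℝ) : List (Fin (N + 1)) → ℝ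
  | [] => 0
  | i :: w => β * cWord N β w + (i.1 : ℝ) * (1 - β) / N

lemma iterWord_eq (N : ℕ) (β : ℝ) (w : List (Fin (N + 1))) (x : ℝ) :
    iterWord (phiFam N β) w x = β ^ w.length * x + cWord N β w := by
  induction w with
  | nil => simp [iterWord, cWord]
  | cons i w ih =>
      simp only [iterWord, List.foldr_cons, Function.comp_apply] at *
      rw [ih, phiFam, cWord]
      simp only [List.length_cons, pow_succ]
      ring

theorem stmt_15 (N : ℕ) (hN : 0 < N) (β : ℝ) (hβ0 : 0 < β)
    (hβ1 : β < 1 / ((N : ℝ) + 1))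
    (Γ : Set ℝ) (hne : Γ.Nonempty) (hcpt : IsCompact Γ)
    (hinv : Γ = ⋃ i : Fin (N + 1), phiFam N β i '' Γ)
    (m : ℕ) (t : Fin (m + 1) → ℝ) (ht0 : t 0 = 0) (ht : StrictMono t)
    (I1 I2 : Finset (List (Fin (N + 1))))
    (hI1 : ∀ w ∈ I1, w ≠ []) (hI2 : ∀ w ∈ I2, w ≠ [])
    (hcover :
      (⋃ w ∈ I1, iterWord (phiFam N β) w '' (⋃ j, (· + t j) '' Γ)) ∪
        (⋃ w ∈ I2, iterWord (phiFam N β) w '' ((fun x => 1 - x) '' (⋃ j, (· + t j) '' Γ))) = Γ) :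
    IsSelfSimilar (⋃ j, (· + t j) '' Γ) := by
  set S : Set ℝ := ⋃ j, (· + t j) '' Γ with hS
  -- β < 1
  have hβlt1 : β < 1 := by
    have hN' : (0:ℝ) < N := by exact_mod_cast hN
    have h1 : (1 : ℝ) / ((N : ℝ) + 1) ≤ 1 := by
      rw [div_le_one (by positivity)]
      linarith
    linarith
  -- the index type
  let α := Fin (m + 1) × ({w : List (Fin (N + 1)) // w ∈ I1} ⊕ {w : List (Fin (N + 1)) // w ∈ I2})
  have : Fintype α := by infer_instance
  -- I1 ∪ I2 nonempty
  have hne2 : I1.Nonempty ∨ I2.Nonempty := by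
    by_contra h
    push_neg at h
    obtain ⟨h1, h2⟩ := h
    rw [h1, h2] at hcover
    simp at hcover
    exact hne.ne_empty hcover.symm
  have hαne : Nonempty α := by
    rcases hne2 with ⟨w, hw⟩ | ⟨w, hw⟩
    · exact ⟨⟨0, Sum.inl ⟨w, hw⟩⟩⟩
    · exact ⟨⟨0, Sum.inr ⟨w, hw⟩⟩⟩
  -- ratio/offset as functions on α
  let R : α → ℝ := fun p => Sum.rec (fun w => β ^ (w.1).length) (fun w => -β ^ (w.1).length) p.2
  let A : α → ℝ := fun p => Sum.rec (fun w => cWord N β w.1 + t p.1)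
      (fun w => β ^ (w.1).length + cWord N β w.1 + t p.1) p.2
  -- the maps
  have hmapL : ∀ (j : Fin (m+1)) (q : {w // w ∈ I1}),
      (fun x => R (j, Sum.inl q) * x + A (j, Sum.inl q)) '' S =
        (· + t j) '' (iterWord (phiFam N β) q.1 '' S) := by
    intro j q
    rw [← Set.image_comp]
    apply Set.image_congr'
    intro x
    simp only [Function.comp_apply, iterWord_eq, R, A]
    ring
  have hmapR : ∀ (j : Fin (m+1)) (q : {w // w ∈ I2}),
      (fun x => R (j, Sum.inr q) * x + A (j, Sum.inr q)) '' S =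
        (· + t j) '' (iterWord (phiFam N β) q.1 '' ((fun x => 1 - x) '' S)) := by
    intro j q
    rw [← Set.image_comp, ← Set.image_comp]
    apply Set.image_congr'
    intro x
    simp only [Function.comp_apply, iterWord_eq, R, A]
    ring
  -- the key invariance
  have hkey : S = ⋃ p : α, (fun x => R p * x + A p) '' S := by
    have : (⋃ p : α, (fun x => R p * x + A p) '' S) = ⋃ j, (· + t j) '' Γ := by
      rw [Set.iUnion_prod']
      refine Set.iUnion_congr fun j => ?_
      rw [Set.iUnion_sum]
      have e1 : (⋃ q : {w // w ∈ I1}, (fun x => R (j, Sum.inl q) * x + A (j, Sum.inl q)) '' S)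
          = (· + t j) '' (⋃ w ∈ I1, iterWord (phiFam N β) w '' S) := by
        rw [Set.image_iUnion₂, Set.iUnion_subtype]
        exact Set.iUnion_congr fun w => Set.iUnion_congr fun hw => hmapL j ⟨w, hw⟩
      have e2 : (⋃ q : {w // w ∈ I2}, (fun x => R (j, Sum.inr q) * x + A (j, Sum.inr q)) '' S)
          = (· + t j) '' (⋃ w ∈ I2, iterWord (phiFam N β) w '' ((fun x => 1 - x) '' S)) := by
        rw [Set.image_iUnion₂, Set.iUnion_subtype]
        exact Set.iUnion_congr fun w => Set.iUnion_congr fun hw => hmapR j ⟨w, hw⟩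
      rw [e1, e2, ← Set.image_union, hcover]
    rw [this]
  -- nonempty and compact
  have hSne : S.Nonempty := by
    obtain ⟨x, hx⟩ := hne
    exact ⟨x + t 0, Set.mem_iUnion.mpr ⟨0, ⟨x, hx, rfl⟩⟩⟩
  have hScpt : IsCompact S := by
    apply isCompact_iUnion
    intro j
    exact hcpt.image (continuous_id.add continuous_const)
  have hpow : ∀ w : List (Fin (N+1)), w ≠ [] → β ^ w.length < 1 := by
    intro w hw
    exact pow_lt_one₀ hβ0.le hβlt1 (List.length_pos_iff.mpr hw).ne'
  have hR : ∀ p : α, R p ≠ 0 ∧ |R p| < 1 := by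
    rintro ⟨j, q | q⟩
    · refine ⟨by simp only [R]; positivity, ?_⟩
      simp only [R]
      rw [abs_of_pos (by positivity)]
      exact hpow q.1 (hI1 q.1 q.2)
    · refine ⟨by simp only [R, neg_ne_zero]; positivity, ?_⟩
      simp only [R]
      rw [abs_neg, abs_of_pos (by positivity)]
      exact hpow q.1 (hI2 q.1 q.2)
  refine ⟨hSne, hScpt, Fintype.card α, R ∘ (Fintype.equivFin α).symm, A ∘ (Fintype.equivFin α).symm,
    Fintype.card_pos, fun i => hR _, ?_⟩
  conv_lhs => rw [hkey]
  exact ((Fintype.equivFin α).symm.surjective.iUnion_comp _).symm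
end

section
/- Let N ∈ ℕ and let β ∈ (0, 1/(N+1)) satisfy (N+1)β + Nβ² = 1. Let Γ be the attractor of {φ_i(x) = βx + i(1−β)/N : i = 0,…,N} and set t = (1 − β²)/β². Then Γ ∪ (Γ + t) is a self-similar set. -/
/-- Index type for the second-level data of the IFS for `Γ ∪ (Γ + t)`:
`none` is the map of ratio `β²`, `some (i,j,k)` the map of ratio `β³` with
offset built from the word `(i, j+1, k)`. -/
abbrev ssO (N : ℕ) := Option (Fin N × Fin N × Fin (N + 1))

/-- Contraction ratios. -/
def ssRho (N : ℕ) (β : ℝ) : ssO N → ℝ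
  | none => β ^ 2
  | some _ => β ^ 3

/-- Translation parts (before the extra shift by `t`). -/
def ssA (N : ℕ) (β : ℝ) : ssO N → ℝ
  | none => 0
  | some (i, j, k) => (β + β ^ 2) * ((i : ℝ) + β * ((j : ℝ) + 1) + β ^ 2 * (k : ℝ))

theorem stmt_19 (N : ℕ) (hN : 0 < N) (β : ℝ) (hβ0 : 0 < β)
    (hβ1 : β < 1 / ((N : ℝ) + 1))
    (hroot : ((N : ℝ) + 1) * β + (N : ℝ) * β ^ 2 = 1)
    (Γ : Set ℝ) (hne : Γ.Nonempty) (hcpt : IsCompact Γ)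
    (hinv : Γ = ⋃ i : Fin (N + 1), (fun x => β * x + (i.1 : ℝ) * (1 - β) / N) '' Γ) :
    IsSelfSimilar (Γ ∪ (· + (1 - β ^ 2) / β ^ 2) '' Γ) := by
  have hβne : β ≠ 0 := ne_of_gt hβ0
  have hN1 : (1 : ℝ) ≤ (N : ℝ) := by exact_mod_cast hN
  have hNne : (N : ℝ) ≠ 0 := by positivity
  have hβlt1 : β < 1 := by
    refine lt_of_lt_of_le hβ1 ?_
    rw [div_le_one (by linarith)]
    linarith
  have hNd : (N : ℝ) * (β + β ^ 2) = 1 - β := by linear_combination hroot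
  have hβ2ne : β ^ 2 ≠ 0 := pow_ne_zero _ hβne
  have ht2 : β ^ 2 * ((1 - β ^ 2) / β ^ 2) = 1 - β ^ 2 := by field_simp
  have ht3 : β ^ 3 * ((1 - β ^ 2) / β ^ 2) = β - β ^ 3 := by
    field_simp
  have hcast : ∀ i : ℕ, (i : ℝ) * (1 - β) / (N : ℝ) = (β + β ^ 2) * (i : ℝ) := by
    intro i
    rw [div_eq_iff hNne]
    linear_combination (-(i : ℝ)) * hNd
  -- membership: applying one map
  have mem1 : ∀ i : ℕ, i ≤ N → ∀ x ∈ Γ, β * x + (β + β ^ 2) * (i : ℝ) ∈ Γ := by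
    intro i hi x hx
    rw [hinv]
    refine Set.mem_iUnion.2 ⟨⟨i, Nat.lt_succ_of_le hi⟩, ⟨x, hx, ?_⟩⟩
    show β * x + (i : ℝ) * (1 - β) / (N : ℝ) = _
    rw [hcast]
  have mem2 : ∀ i j : ℕ, i ≤ N → j ≤ N → ∀ x ∈ Γ,
      β ^ 2 * x + (β + β ^ 2) * ((i : ℝ) + β * (j : ℝ)) ∈ Γ := by
    intro i j hi hj x hx
    have h := mem1 i hi _ (mem1 j hj x hx)
    have e : β ^ 2 * x + (β + β ^ 2) * ((i : ℝ) + β * (j : ℝ))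
        = β * (β * x + (β + β ^ 2) * (j : ℝ)) + (β + β ^ 2) * (i : ℝ) := by ring
    rw [e]; exact h
  have mem3 : ∀ i j k : ℕ, i ≤ N → j ≤ N → k ≤ N → ∀ x ∈ Γ,
      β ^ 3 * x + (β + β ^ 2) * ((i : ℝ) + β * (j : ℝ) + β ^ 2 * (k : ℝ)) ∈ Γ := by
    intro i j k hi hj hk x hx
    have h := mem1 i hi _ (mem1 j hj _ (mem1 k hk x hx))
    have e : β ^ 3 * x + (β + β ^ 2) * ((i : ℝ) + β * (j : ℝ) + β ^ 2 * (k : ℝ))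
        = β * (β * (β * x + (β + β ^ 2) * (k : ℝ)) + (β + β ^ 2) * (j : ℝ))
          + (β + β ^ 2) * (i : ℝ) := by ring
    rw [e]; exact h
  -- splitting: every point of Γ is in a level-1 piece
  have split1 : ∀ x ∈ Γ, ∃ i : ℕ, i ≤ N ∧ ∃ y ∈ Γ, x = β * y + (β + β ^ 2) * (i : ℝ) := by
    intro x hx
    rw [hinv] at hx
    obtain ⟨i, hi⟩ := Set.mem_iUnion.1 hx
    obtain ⟨y, hy, hxy⟩ := hi
    refine ⟨i.1, Nat.lt_succ_iff.1 i.2, y, hy, ?_⟩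
    rw [← hcast]
    exact hxy.symm
  have split3 : ∀ x ∈ Γ, ∃ i j k : ℕ, i ≤ N ∧ j ≤ N ∧ k ≤ N ∧ ∃ y ∈ Γ,
      x = β ^ 3 * y + (β + β ^ 2) * ((i : ℝ) + β * (j : ℝ) + β ^ 2 * (k : ℝ)) := by
    intro x hx
    obtain ⟨i, hi, y1, hy1, e1⟩ := split1 x hx
    obtain ⟨j, hj, y2, hy2, e2⟩ := split1 y1 hy1
    obtain ⟨k, hk, y3, hy3, e3⟩ := split1 y2 hy2
    exact ⟨i, j, k, hi, hj, hk, y3, hy3, by rw [e1, e2, e3]; ring⟩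
  set S : Set ℝ := Γ ∪ (· + (1 - β ^ 2) / β ^ 2) '' Γ with hS
  -- every point of Γ is in the image of S by one of the (unshifted) maps
  have key : ∀ w ∈ Γ, ∃ o : ssO N, ∃ z ∈ S, w = ssRho N β o * z + ssA N β o := by
    intro w hw
    obtain ⟨i, j, k, hi, hj, hk, y, hy, e⟩ := split3 w hw
    by_cases h00 : i = 0 ∧ j = 0
    · refine ⟨none, β * y + (β + β ^ 2) * (k : ℝ), Or.inl (mem1 k hk y hy), ?_⟩
      simp only [ssRho, ssA]
      rw [e, h00.1, h00.2]; push_cast; ring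
    · by_cases hNN : i = N ∧ j = N
      · refine ⟨none, (β * y + (β + β ^ 2) * (k : ℝ)) + (1 - β ^ 2) / β ^ 2,
          Or.inr ⟨_, mem1 k hk y hy, rfl⟩, ?_⟩
        simp only [ssRho, ssA]
        rw [e, hNN.1, hNN.2]
        linear_combination (1 + β) * hNd - ht2
      · by_cases hj0 : j = 0
        · have hi1 : 1 ≤ i := by
            rcases Nat.eq_zero_or_pos i with h | h
            · exact absurd ⟨h, hj0⟩ h00
            · exact h
          refine ⟨some (⟨i - 1, by omega⟩, ⟨0, hN⟩, ⟨k, by omega⟩),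
            y + (1 - β ^ 2) / β ^ 2, Or.inr ⟨y, hy, rfl⟩, ?_⟩
          simp only [ssRho, ssA]
          rw [e, hj0]
          have hc : ((i - 1 : ℕ) : ℝ) = (i : ℝ) - 1 := by
            push_cast [Nat.cast_sub hi1]; ring
          rw [hc]
          push_cast
          linear_combination -ht3
        · by_cases hiN : i = N
          · have hjN : j < N := by omega
            refine ⟨some (⟨N - 1, by omega⟩, ⟨j, hjN⟩, ⟨k, by omega⟩),
              y + (1 - β ^ 2) / β ^ 2, Or.inr ⟨y, hy, rfl⟩, ?_⟩
            simp only [ssRho, ssA]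
            rw [e, hiN]
            have hc1 : ((N - 1 : ℕ) : ℝ) = (N : ℝ) - 1 := by
              push_cast [Nat.cast_sub hN]; ring
            rw [hc1]
            linear_combination -ht3
          · have hiN' : i < N := by omega
            have hj1 : 1 ≤ j := by omega
            refine ⟨some (⟨i, hiN'⟩, ⟨j - 1, by omega⟩, ⟨k, by omega⟩), y, Or.inl hy, ?_⟩
            simp only [ssRho, ssA]
            rw [e]
            have hc : ((j - 1 : ℕ) : ℝ) = (j : ℝ) - 1 := by
              push_cast [Nat.cast_sub hj1]; ring
            rw [hc]
            ring
  -- images of S under unshifted maps land in Γ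
  have subkey : ∀ o : ssO N, ∀ z ∈ S, ssRho N β o * z + ssA N β o ∈ Γ := by
    rintro (_ | ⟨i, j, k⟩) z (hz | ⟨y, hy, rfl⟩)
    · simp only [ssRho, ssA, add_zero]
      have h := mem2 0 0 (Nat.zero_le N) (Nat.zero_le N) z hz
      have e : β ^ 2 * z = β ^ 2 * z + (β + β ^ 2) * (((0 : ℕ) : ℝ) + β * ((0 : ℕ) : ℝ)) := by
        push_cast; ring
      rw [e]; exact h
    · simp only [ssRho, ssA, add_zero]
      have h := mem2 N N le_rfl le_rfl y hy
      have e : β ^ 2 * (y + (1 - β ^ 2) / β ^ 2)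
          = β ^ 2 * y + (β + β ^ 2) * (((N : ℕ) : ℝ) + β * ((N : ℕ) : ℝ)) := by
        linear_combination ht2 - (1 + β) * hNd
      rw [e]; exact h
    · simp only [ssRho, ssA]
      have h := mem3 i (j + 1) k (le_of_lt i.2) (by omega) (by omega) z hz
      have e : β ^ 3 * z + (β + β ^ 2) * ((i : ℝ) + β * ((j : ℝ) + 1) + β ^ 2 * (k : ℝ))
          = β ^ 3 * z + (β + β ^ 2) * ((i : ℝ) + β * (((j : ℕ) + 1 : ℕ) : ℝ)
            + β ^ 2 * (k : ℝ)) := by push_cast; ring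
      rw [e]; exact h
    · simp only [ssRho, ssA]
      have h := mem3 (i + 1) j k (by omega) (by omega) (by omega) y hy
      have e : β ^ 3 * (y + (1 - β ^ 2) / β ^ 2)
            + (β + β ^ 2) * ((i : ℝ) + β * ((j : ℝ) + 1) + β ^ 2 * (k : ℝ))
          = β ^ 3 * y + (β + β ^ 2) * ((((i : ℕ) + 1 : ℕ) : ℝ) + β * (j : ℝ)
            + β ^ 2 * (k : ℝ)) := by
        push_cast
        linear_combination ht3
      rw [e]; exact h
  -- assemble the self-similarity
  refine ⟨hne.inl, hcpt.union (hcpt.image (continuous_id.add continuous_const)),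
    Fintype.card (Bool × ssO N),
    fun m => ssRho N β ((Fintype.equivFin (Bool × ssO N)).symm m).2,
    fun m => ssA N β ((Fintype.equivFin (Bool × ssO N)).symm m).2
      + cond ((Fintype.equivFin (Bool × ssO N)).symm m).1 ((1 - β ^ 2) / β ^ 2) 0,
    Fintype.card_pos, ?_, ?_⟩
  · have hgen : ∀ o : ssO N, ssRho N β o ≠ 0 ∧ |ssRho N β o| < 1 := by
      rintro (_ | o) <;> simp only [ssRho] <;> constructor
      · exact pow_ne_zero _ hβne
      · rw [abs_of_pos (by positivity)]
        exact pow_lt_one₀ (le_of_lt hβ0) hβlt1 (by norm_num)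
      · exact pow_ne_zero _ hβne
      · rw [abs_of_pos (by positivity)]
        exact pow_lt_one₀ (le_of_lt hβ0) hβlt1 (by norm_num)
    intro m
    exact hgen _
  · have hmain : S = ⋃ p : Bool × ssO N,
        (fun x => ssRho N β p.2 * x
          + (ssA N β p.2 + cond p.1 ((1 - β ^ 2) / β ^ 2) 0)) '' S := by
      apply Set.Subset.antisymm
      · rintro x (hx | ⟨w, hw, rfl⟩)
        · obtain ⟨o, z, hz, e⟩ := key x hx
          refine Set.mem_iUnion.2 ⟨(false, o), z, hz, ?_⟩
          simp only [cond_false, add_zero]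
          exact e.symm
        · obtain ⟨o, z, hz, e⟩ := key w hw
          refine Set.mem_iUnion.2 ⟨(true, o), z, hz, ?_⟩
          simp only [cond_true]
          rw [← add_assoc, ← e]
      · intro x hx
        obtain ⟨⟨s, o⟩, z, hz, rfl⟩ := Set.mem_iUnion.1 hx
        have hmem := subkey o z hz
        cases s
        · simp only [cond_false, add_zero]
          exact Or.inl hmem
        · exact Or.inr ⟨ssRho N β o * z + ssA N β o, hmem, by simp [add_assoc]⟩
    exact hmain.trans (((Fintype.equivFin (Bool × ssO N)).symm).surjective.iUnion_comp
      (fun p => (fun x => ssRho N β p.2 * x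
        + (ssA N β p.2 + cond p.1 ((1 - β ^ 2) / β ^ 2) 0)) '' S)).symm
end
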